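/- arXiv:1801.09874 — 8 statements merged into one kernel-verified Lean document; each statement's English description precedes it below -/
import Mathlib

section
/- Let μ : [0,1] → ℝ be continuous, c > 0, and K_d : ℝ → ℝ be integrable with support contained in [−1,1], ∫_{−1}^{1} K_d(x)dx = 1 and ∫_{−1}^{1} |K_d(x)|dx ≤ κ. Assume there exist ε₀ > 0 and M ∈ ℕ such that (a) for every δ ∈ (0, ε₀] the set {t ∈ [0,1] : |μ(t) − μ(0) − c| ≤ δ} is a union of at most M closed intervals, (b) the equation μ(t) − μ(0) = c has at most M solutions in [0,1], and (c) there exist A > 0 and ι > 0 with m_{c+μ(0),δ}(μ) ≤ A·δ^ι for all δ ∈ (0, ε₀]. Then there exists a constant C > 0 such that for all integers N ≥ 1 and all h ∈ (0, ε₀]: |T⁺_{N,c,h} − T_c⁺| ≤ C · max(h^ι, 1/N). -/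
/-!
Write `g` for the indicator of `{μ - μ 0 > c}` and split the error through the Riemann sum of `g`.
The smoothed step `y ↦ ∫_{u > c} K((y - u)/h)/h` is bounded by `κ` and equals `1{y > c}` unless
`|y - c| ≤ h`, so the smoothing error is at most `(κ + 1)/N` times the number of grid points `i/N`
in the band `{|μ - μ 0 - c| ≤ h}`. The band is a union of `M` intervals, each of length at most
its measure `≤ A h^ι`, hence contains at most `M (N A h^ι + 1)` grid points.
For the discretisation error compare cell by cell: by the intermediate value theorem `g` is
constant on each cell `[(i-1)/N, i/N]` free of roots of `μ - μ 0 = c`, and each of the at most `M`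
roots lies in at most two cells, each contributing at most `1/N`.
-/

open MeasureTheory Set

noncomputable def smoothedStep (K : ℝ → ℝ) (h c y : ℝ) : ℝ :=
  ∫ u in Ioi c, (1 / h) * K ((y - u) / h)

section SmoothedStep

variable {K : ℝ → ℝ} {h c y κ : ℝ}

lemma integral_rescale_reflect (hh : 0 < h) (y : ℝ) :
    ∫ u, (1 / h) * K ((y - u) / h) = ∫ v, K v := by
  rw [integral_const_mul, integral_sub_left_eq_self (fun u => K (u / h)),
    Measure.integral_comp_div, smul_eq_mul, abs_of_pos hh, ← mul_assoc,
    one_div_mul_cancel hh.ne', one_mul]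

lemma integrable_rescale_reflect (hK : Integrable K) (hh : 0 < h) (y : ℝ) :
    Integrable fun u => (1 / h) * K ((y - u) / h) :=
  ((hK.comp_div hh.ne').comp_sub_left y).const_mul _

lemma smoothedStep_eq_one (hh : 0 < h)
    (hsupp : Function.support K ⊆ Icc (-1) 1) (hone : ∫ x in Icc (-1 : ℝ) 1, K x = 1)
    (hy : c + h ≤ y) : smoothedStep K h c y = 1 := by
  have hvanish : ∀ u ∉ Ici c, (1 / h) * K ((y - u) / h) = 0 := by
    intro u hu
    rw [mem_Ici, not_le] at hu
    have : 1 < (y - u) / h := by rw [lt_div_iff₀ hh]; linarith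
    rw [Function.support_subset_iff'.mp hsupp _ fun hmem => this.not_ge hmem.2, mul_zero]
  rw [smoothedStep, ← integral_Ici_eq_integral_Ioi,
    setIntegral_eq_integral_of_forall_compl_eq_zero hvanish, integral_rescale_reflect hh,
    ← setIntegral_eq_integral_of_forall_compl_eq_zero (Function.support_subset_iff'.mp hsupp),
    hone]

lemma smoothedStep_eq_zero (hh : 0 < h) (hsupp : Function.support K ⊆ Icc (-1) 1)
    (hy : y ≤ c - h) : smoothedStep K h c y = 0 := by
  refine setIntegral_eq_zero_of_forall_eq_zero fun u hu => ?_
  have : (y - u) / h < -1 := by rw [div_lt_iff₀ hh]; linarith [mem_Ioi.mp hu]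
  rw [Function.support_subset_iff'.mp hsupp _ fun hmem => this.not_ge hmem.1, mul_zero]

lemma abs_smoothedStep_le (hK : Integrable K) (hh : 0 < h)
    (hsupp : Function.support K ⊆ Icc (-1) 1) (habs : ∫ x in Icc (-1 : ℝ) 1, |K x| ≤ κ) :
    |smoothedStep K h c y| ≤ κ := by
  have habs_eq : ∀ u, |(1 / h) * K ((y - u) / h)| = (1 / h) * |K ((y - u) / h)| := fun u => by
    rw [abs_mul, abs_of_pos (one_div_pos.mpr hh)]
  calc |smoothedStep K h c y|
      ≤ ∫ u in Ioi c, |(1 / h) * K ((y - u) / h)| := abs_integral_le_integral_abs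
    _ ≤ ∫ u, |(1 / h) * K ((y - u) / h)| :=
        setIntegral_le_integral (integrable_rescale_reflect hK hh y).abs
          (.of_forall fun _ => abs_nonneg _)
    _ = ∫ v, |K v| := by
        simp_rw [habs_eq]; exact integral_rescale_reflect (K := fun v => |K v|) hh y
    _ = ∫ x in Icc (-1 : ℝ) 1, |K x| := by
        refine (setIntegral_eq_integral_of_forall_compl_eq_zero fun x hx => ?_).symm
        rw [Function.support_subset_iff'.mp hsupp x hx, abs_zero]
    _ ≤ κ := habs

lemma abs_smoothedStep_sub_ite_le (hK : Integrable K) (hh : 0 < h)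
    (hsupp : Function.support K ⊆ Icc (-1) 1) (hone : ∫ x in Icc (-1 : ℝ) 1, K x = 1)
    (habs : ∫ x in Icc (-1 : ℝ) 1, |K x| ≤ κ) :
    |smoothedStep K h c y - if c < y then 1 else 0| ≤ if |y - c| ≤ h then κ + 1 else 0 := by
  by_cases hband : |y - c| ≤ h
  · have hbound := abs_le.mp (abs_smoothedStep_le (c := c) (y := y) hK hh hsupp habs)
    rw [if_pos hband, abs_le]
    split_ifs <;> constructor <;> linarith
  · rw [if_neg hband]
    rcases lt_abs.mp (not_le.mp hband) with hgt | hlt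
    · rw [if_pos (by linarith), smoothedStep_eq_one hh hsupp hone (by linarith), sub_self,
        abs_zero]
    · rw [if_neg (by linarith), smoothedStep_eq_zero hh hsupp (by linarith), sub_self, abs_zero]

end SmoothedStep

section GridCount

variable (s : Finset ℕ) {N : ℕ}

lemma card_filter_natCast_mem_Icc_le {x y : ℝ} (hxy : x ≤ y) :
    ((s.filter fun i : ℕ => (i : ℝ) ∈ Icc x y).card : ℝ) ≤ y - x + 1 := by
  set t := s.filter fun i : ℕ => (i : ℝ) ∈ Icc x y
  rcases t.eq_empty_or_nonempty with ht | ht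
  · rw [ht, Finset.card_empty, Nat.cast_zero]; linarith
  have hlo : x ≤ t.min' ht := (Finset.mem_filter.mp (t.min'_mem ht)).2.1
  have hhi : (t.max' ht : ℝ) ≤ y := (Finset.mem_filter.mp (t.max'_mem ht)).2.2
  have hsub : t ⊆ Finset.Icc (t.min' ht) (t.max' ht) := fun i hi =>
    Finset.mem_Icc.mpr ⟨t.min'_le i hi, t.le_max' i hi⟩
  calc (t.card : ℝ) ≤ ((t.max' ht + 1 - t.min' ht : ℕ) : ℝ) := by
        exact_mod_cast (Finset.card_le_card hsub).trans_eq (Nat.card_Icc _ _)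
    _ = t.max' ht + 1 - t.min' ht := by
        rw [Nat.cast_sub ((t.min'_le_max' ht).trans (Nat.le_add_right _ 1)), Nat.cast_add_one]
    _ ≤ y - x + 1 := by linarith

lemma card_filter_div_mem_Icc_le (hN : 0 < N) {a b : ℝ} (hab : a ≤ b) :
    ((s.filter fun i : ℕ => (i : ℝ) / N ∈ Icc a b).card : ℝ) ≤ N * (b - a) + 1 := by
  have hN' : (0 : ℝ) < N := Nat.cast_pos.mpr hN
  have hmem : ∀ i : ℕ, (i : ℝ) / N ∈ Icc a b ↔ (i : ℝ) ∈ Icc (N * a) (N * b) := fun i => by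
    rw [mem_Icc, mem_Icc, le_div_iff₀ hN', div_le_iff₀ hN', mul_comm a, mul_comm b]
  simp_rw [hmem]
  linarith [card_filter_natCast_mem_Icc_le s (mul_le_mul_of_nonneg_left hab hN'.le)]

open scoped Classical in
lemma card_filter_div_mem_iUnion_Icc_le (hN : 0 < N) {M : ℕ} (a b : Fin M → ℝ) :
    ((s.filter fun i : ℕ => (i : ℝ) / N ∈ ⋃ j, Icc (a j) (b j)).card : ℝ)
      ≤ M * (N * volume.real (⋃ j, Icc (a j) (b j)) + 1) := by
  have hfin : volume (⋃ j, Icc (a j) (b j)) ≠ ⊤ :=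
    (isCompact_iUnion fun _ => isCompact_Icc).measure_lt_top.ne
  have hpiece : ∀ j, ((s.filter fun i : ℕ => (i : ℝ) / N ∈ Icc (a j) (b j)).card : ℝ)
      ≤ N * volume.real (⋃ j, Icc (a j) (b j)) + 1 := by
    intro j
    rcases le_or_gt (a j) (b j) with hab | hba
    · have hlen : b j - a j ≤ volume.real (⋃ j, Icc (a j) (b j)) := by
        calc b j - a j = volume.real (Icc (a j) (b j)) := by
              rw [Real.volume_real_Icc, max_eq_left (sub_nonneg.mpr hab)]
          _ ≤ _ := measureReal_mono (subset_iUnion (fun j => Icc (a j) (b j)) j) hfin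
      calc ((s.filter fun i : ℕ => (i : ℝ) / N ∈ Icc (a j) (b j)).card : ℝ)
          ≤ N * (b j - a j) + 1 := card_filter_div_mem_Icc_le s hN hab
        _ ≤ N * volume.real (⋃ j, Icc (a j) (b j)) + 1 := by gcongr
    · have hempty : (s.filter fun i : ℕ => (i : ℝ) / N ∈ Icc (a j) (b j)) = ∅ :=
        Finset.filter_eq_empty_iff.mpr fun i _ hi => (not_le.mpr hba) (hi.1.trans hi.2)
      rw [hempty, Finset.card_empty, Nat.cast_zero]
      positivity
  calc ((s.filter fun i : ℕ => (i : ℝ) / N ∈ ⋃ j, Icc (a j) (b j)).card : ℝ)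
      ≤ ∑ j, ((s.filter fun i : ℕ => (i : ℝ) / N ∈ Icc (a j) (b j)).card : ℝ) := by
        refine mod_cast (Finset.card_le_card fun i hi => ?_).trans
          (Finset.card_biUnion_le (s := Finset.univ))
        obtain ⟨his, hmem⟩ := Finset.mem_filter.mp hi
        obtain ⟨j, hj⟩ := mem_iUnion.mp hmem
        exact Finset.mem_biUnion.mpr ⟨j, Finset.mem_univ j, Finset.mem_filter.mpr ⟨his, hj⟩⟩
    _ ≤ ∑ _j : Fin M, (N * volume.real (⋃ j, Icc (a j) (b j)) + 1) :=
        Finset.sum_le_sum fun j _ => hpiece j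
    _ = M * (N * volume.real (⋃ j, Icc (a j) (b j)) + 1) := by
        rw [Finset.sum_const, Finset.card_univ, Fintype.card_fin, nsmul_eq_mul]

lemma card_filter_mem_cell_le (hN : 0 < N) (z : ℝ) :
    (s.filter fun i : ℕ => z ∈ Icc (((i : ℝ) - 1) / N) (i / N)).card ≤ 2 := by
  have hN' : (0 : ℝ) < N := Nat.cast_pos.mpr hN
  have hmem : ∀ i : ℕ, z ∈ Icc (((i : ℝ) - 1) / N) (i / N) ↔ (i : ℝ) ∈ Icc (N * z) (N * z + 1) :=
    fun i => by
      rw [mem_Icc, mem_Icc, div_le_iff₀ hN', le_div_iff₀ hN']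
      constructor <;> rintro ⟨h₁, h₂⟩ <;> constructor <;> linarith
  simp_rw [hmem]
  have hcard : ((s.filter fun i : ℕ => (i : ℝ) ∈ Icc (N * z) (N * z + 1)).card : ℝ) ≤ 2 := by
    linarith [card_filter_natCast_mem_Icc_le s (le_add_of_nonneg_right zero_le_one :
      N * z ≤ N * z + 1)]
  exact_mod_cast hcard

lemma card_filter_cell_meets_le (hN : 0 < N) (Z : Finset ℝ) :
    (s.filter fun i : ℕ => ∃ z ∈ Z, z ∈ Icc (((i : ℝ) - 1) / N) (i / N)).card ≤ 2 * Z.card := by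
  calc (s.filter fun i : ℕ => ∃ z ∈ Z, z ∈ Icc (((i : ℝ) - 1) / N) (i / N)).card
      ≤ (Z.biUnion fun z => s.filter fun i : ℕ => z ∈ Icc (((i : ℝ) - 1) / N) (i / N)).card :=
        Finset.card_le_card fun i hi => by
          obtain ⟨his, z, hz, hzi⟩ := Finset.mem_filter.mp hi
          exact Finset.mem_biUnion.mpr ⟨z, hz, Finset.mem_filter.mpr ⟨his, hzi⟩⟩
    _ ≤ ∑ z ∈ Z, (s.filter fun i : ℕ => z ∈ Icc (((i : ℝ) - 1) / N) (i / N)).card :=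
        Finset.card_biUnion_le
    _ ≤ ∑ _z ∈ Z, 2 := Finset.sum_le_sum fun z _ => card_filter_mem_cell_le s hN z
    _ = 2 * Z.card := by rw [Finset.sum_const, smul_eq_mul, mul_comm]

end GridCount

lemma abs_mul_sub_intervalIntegral_le {g : ℝ → ℝ} {a b ε : ℝ} (hab : a ≤ b)
    (hg : IntervalIntegrable g volume a b) (hε : ∀ x ∈ Icc a b, |g b - g x| ≤ ε) :
    |(b - a) * g b - ∫ x in a..b, g x| ≤ (b - a) * ε := by
  rw [← smul_eq_mul, ← intervalIntegral.integral_const,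
    ← intervalIntegral.integral_sub intervalIntegrable_const hg, mul_comm,
    ← abs_of_nonneg (sub_nonneg.mpr hab)]
  refine (Real.norm_eq_abs _).symm.trans_le
    (intervalIntegral.norm_integral_le_of_norm_le_const fun x hx => ?_)
  exact (Real.norm_eq_abs _).trans_le (hε x (Ioc_subset_Icc_self (uIoc_of_le hab ▸ hx)))

lemma Icc_cell_subset_Icc_zero_one {N i : ℕ} (hi : i ∈ Finset.Icc 1 N) :
    Icc (((i : ℝ) - 1) / N) (i / N) ⊆ Icc 0 1 := by
  obtain ⟨hi1, hiN⟩ := Finset.mem_Icc.mp hi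
  exact Icc_subset_Icc (div_nonneg (sub_nonneg.mpr (Nat.one_le_cast.mpr hi1)) N.cast_nonneg)
    (div_le_one_of_le₀ (Nat.cast_le.mpr hiN) N.cast_nonneg)

lemma abs_riemannSum_sub_intervalIntegral_le {g : ℝ → ℝ} {N : ℕ} (hN : 0 < N)
    (hg : IntervalIntegrable g volume 0 1) (ε : ℕ → ℝ)
    (hε : ∀ i ∈ Finset.Icc 1 N, ∀ x ∈ Icc (((i : ℝ) - 1) / N) (i / N), |g (i / N) - g x| ≤ ε i) :
    |(1 / N) * ∑ i ∈ Finset.Icc 1 N, g (i / N) - ∫ x in (0 : ℝ)..1, g x|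
      ≤ (1 / N) * ∑ i ∈ Finset.Icc 1 N, ε i := by
  have hN' : (0 : ℝ) < N := Nat.cast_pos.mpr hN
  have hcell : ∀ i : ℕ, (i : ℝ) / N - ((i : ℝ) - 1) / N = 1 / N := fun i => by ring
  have hsplit : ∫ x in (0 : ℝ)..1, g x
      = ∑ i ∈ Finset.Icc 1 N, ∫ x in ((i : ℝ) - 1) / N..i / N, g x := by
    have hadj := intervalIntegral.sum_integral_adjacent_intervals (a := fun k : ℕ => (k : ℝ) / N)
      (n := N) (μ := volume) fun k hk => hg.mono_set ?_
    · rw [← Finset.Ico_add_one_right_eq_Icc, Finset.sum_Ico_eq_sum_range, Nat.add_sub_cancel]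
      convert hadj.symm using 1
      · simp [hN'.ne']
      · refine Finset.sum_congr rfl fun k _ => ?_
        congr 1 <;> push_cast <;> ring
    · have hsub := Icc_cell_subset_Icc_zero_one (N := N) (i := k + 1)
        (Finset.mem_Icc.mpr ⟨Nat.le_add_left 1 k, hk⟩)
      rw [Nat.cast_add_one, add_sub_cancel_right] at hsub
      rwa [uIcc_of_le zero_le_one, uIcc_of_le (by gcongr; simp), Nat.cast_add_one]
  rw [hsplit, Finset.mul_sum, Finset.mul_sum, ← Finset.sum_sub_distrib]
  refine (Finset.abs_sum_le_sum_abs _ _).trans (Finset.sum_le_sum fun i hi => ?_)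
  rw [← hcell i]
  refine abs_mul_sub_intervalIntegral_le (by gcongr; linarith) (hg.mono_set ?_) (hε i hi)
  rw [uIcc_of_le zero_le_one, uIcc_of_le (by gcongr; linarith)]
  exact Icc_cell_subset_Icc_zero_one hi

lemma IsPreconnected.lt_iff_lt_of_forall_ne {X α : Type*} [TopologicalSpace X] [LinearOrder α]
    [TopologicalSpace α] [OrderClosedTopology α] {s : Set X} (hs : IsPreconnected s) {f : X → α}
    (hf : ContinuousOn f s) {c : α} (hne : ∀ z ∈ s, f z ≠ c) {x y : X} (hx : x ∈ s)
    (hy : y ∈ s) : c < f x ↔ c < f y := by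
  have key : ∀ x ∈ s, ∀ y ∈ s, c < f x → c < f y := by
    intro x hx y hy hcx
    by_contra! hyc
    obtain ⟨z, hz, hzc⟩ := hs.intermediate_value hy hx hf ⟨hyc, hcx.le⟩
    exact hne z hz hzc
  exact ⟨key x hx y hy, key y hy x hx⟩

lemma abs_riemannSum_indicator_sub_volume_le {f : ℝ → ℝ} (hf : ContinuousOn f (Icc 0 1))
    {c : ℝ} {M N : ℕ} (hN : 0 < N) (hroots : {s ∈ Icc (0 : ℝ) 1 | f s = c}.encard ≤ M) :
    |(1 / N) * ∑ i ∈ Finset.Icc 1 N, {s ∈ Icc (0 : ℝ) 1 | f s > c}.indicator 1 ((i : ℝ) / N)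
      - volume.real {s ∈ Icc (0 : ℝ) 1 | f s > c}| ≤ 2 * M / N := by
  set W := {s ∈ Icc (0 : ℝ) 1 | f s > c}
  have hW : MeasurableSet W := by
    have hWeq : W = Icc 0 1 \ (Icc 0 1 ∩ f ⁻¹' Iic c) := by
      ext s; simp [W, and_comm]
    rw [hWeq]
    exact measurableSet_Icc.diff
      (hf.preimage_isClosed_of_isClosed isClosed_Icc isClosed_Iic).measurableSet
  have hvol : volume.real W = ∫ x in (0 : ℝ)..1, W.indicator 1 x := by
    rw [intervalIntegral.integral_of_le zero_le_one, ← integral_Icc_eq_integral_Ioc,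
      setIntegral_eq_integral_of_forall_compl_eq_zero fun x hx =>
        indicator_of_notMem (fun hxW => hx hxW.1) _, integral_indicator_one hW]
  have hint : IntervalIntegrable (W.indicator 1) volume 0 1 :=
    (IntegrableOn.integrable_indicator
      (integrableOn_const (C := (1 : ℝ))
        ((measure_mono (sep_subset _ _)).trans_lt measure_Icc_lt_top).ne) hW).intervalIntegrable
  have hZ := Set.finite_of_encard_le_coe hroots
  have hZcard : hZ.toFinset.card ≤ M := by
    rwa [hZ.encard_eq_coe_toFinset_card, ENat.natCast_le_natCast] at hroots
  rw [hvol]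
  refine (abs_riemannSum_sub_intervalIntegral_le hN hint
    (fun i => if ∃ z ∈ hZ.toFinset, z ∈ Icc (((i : ℝ) - 1) / N) (i / N) then 1 else 0)
    fun i hi x hx => ?_).trans ?_
  · split_ifs with hbad
    · simp only [indicator_apply, Pi.one_apply]
      split_ifs <;> norm_num
    · push Not at hbad
      have hcell := Icc_cell_subset_Icc_zero_one hi
      have hright : (i : ℝ) / N ∈ Icc (((i : ℝ) - 1) / N) (i / N) :=
        right_mem_Icc.mpr (by gcongr; linarith)
      have hiff : (i : ℝ) / N ∈ W ↔ x ∈ W := by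
        simp only [W, mem_sep_iff, hcell hx, hcell hright, true_and, gt_iff_lt]
        exact isPreconnected_Icc.lt_iff_lt_of_forall_ne (hf.mono hcell)
          (fun z hz hzc => hbad z (hZ.mem_toFinset.mpr ⟨hcell hz, hzc⟩) hz) hright hx
      rw [show W.indicator 1 ((i : ℝ) / N) = W.indicator 1 x by
        simp only [indicator_apply, hiff, Pi.one_apply], sub_self, abs_zero]
  · have hcard_bad : ((Finset.Icc 1 N).filter fun i : ℕ =>
        ∃ z ∈ hZ.toFinset, z ∈ Icc (((i : ℝ) - 1) / N) (i / N)).card ≤ 2 * M :=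
      (card_filter_cell_meets_le _ hN _).trans (by omega)
    rw [Finset.sum_boole, one_div_mul_eq_div]
    exact div_le_div_of_nonneg_right (by exact_mod_cast hcard_bad) N.cast_nonneg

lemma abs_riemannSum_smoothedStep_sub_indicator_le {K : ℝ → ℝ} {h κ : ℝ} (hK : Integrable K)
    (hh : 0 < h) (hsupp : Function.support K ⊆ Icc (-1) 1)
    (hone : ∫ x in Icc (-1 : ℝ) 1, K x = 1) (habs : ∫ x in Icc (-1 : ℝ) 1, |K x| ≤ κ)
    {f : ℝ → ℝ} {c : ℝ} {M N : ℕ} (hN : 0 < N) (a b : Fin M → ℝ)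
    (hband : {s ∈ Icc (0 : ℝ) 1 | |f s - c| ≤ h} = ⋃ j, Icc (a j) (b j)) :
    |(1 / N) * ∑ i ∈ Finset.Icc 1 N, smoothedStep K h c (f (i / N))
      - (1 / N) * ∑ i ∈ Finset.Icc 1 N, {s ∈ Icc (0 : ℝ) 1 | f s > c}.indicator 1 ((i : ℝ) / N)|
      ≤ (κ + 1) * M * (volume.real {s ∈ Icc (0 : ℝ) 1 | |f s - c| ≤ h} + 1 / N) := by
  set B := {s ∈ Icc (0 : ℝ) 1 | |f s - c| ≤ h}
  have hN' : (0 : ℝ) < N := Nat.cast_pos.mpr hN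
  have hκ : 0 ≤ κ + 1 := by
    linarith [(integral_nonneg fun x => abs_nonneg (K x)).trans habs]
  have hpt : ∀ i ∈ Finset.Icc 1 N,
      |smoothedStep K h c (f (i / N)) - {s ∈ Icc (0 : ℝ) 1 | f s > c}.indicator 1 ((i : ℝ) / N)|
        ≤ if (i : ℝ) / N ∈ B then κ + 1 else 0 := by
    intro i hi
    have hgrid : (i : ℝ) / N ∈ Icc 0 1 :=
      Icc_cell_subset_Icc_zero_one hi (right_mem_Icc.mpr (by gcongr; linarith))
    simpa only [indicator_apply, B, mem_sep_iff, hgrid, true_and, gt_iff_lt, Pi.one_apply]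
      using abs_smoothedStep_sub_ite_le hK hh hsupp hone habs
  have hcount : (((Finset.Icc 1 N).filter fun i : ℕ => (i : ℝ) / N ∈ B).card : ℝ)
      ≤ M * (N * volume.real B + 1) := by
    simp only [hband]
    convert card_filter_div_mem_iUnion_Icc_le (Finset.Icc 1 N) hN a b
  rw [← mul_sub, ← Finset.sum_sub_distrib, abs_mul, abs_of_pos (one_div_pos.mpr hN')]
  calc 1 / N * |∑ i ∈ Finset.Icc 1 N, (smoothedStep K h c (f (i / N))
        - {s ∈ Icc (0 : ℝ) 1 | f s > c}.indicator 1 ((i : ℝ) / N))|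
      ≤ 1 / N * ∑ i ∈ Finset.Icc 1 N, if (i : ℝ) / N ∈ B then κ + 1 else 0 := by
        gcongr
        exact (Finset.abs_sum_le_sum_abs _ _).trans (Finset.sum_le_sum hpt)
    _ = 1 / N * ((κ + 1) * ((Finset.Icc 1 N).filter fun i : ℕ => (i : ℝ) / N ∈ B).card) := by
        rw [Finset.sum_ite, Finset.sum_const_zero, add_zero, Finset.sum_const, nsmul_eq_mul,
          mul_comm ((κ + 1))]
    _ ≤ 1 / N * ((κ + 1) * (M * (N * volume.real B + 1))) :=
        mul_le_mul_of_nonneg_left (mul_le_mul_of_nonneg_left hcount hκ) (by positivity)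
    _ = (κ + 1) * M * (volume.real B + 1 / N) := by field_simp

theorem excess_measure_riemann_approx_general
    (μ : ℝ → ℝ) (hμ : ContinuousOn μ (Icc 0 1))
    (c : ℝ)
    (K_d : ℝ → ℝ) (κ : ℝ)
    (hK_int : Integrable K_d)
    (hK_supp : Function.support K_d ⊆ Icc (-1 : ℝ) 1)
    (hK_one : (∫ x in Icc (-1 : ℝ) 1, K_d x) = 1)
    (hK_abs : (∫ x in Icc (-1 : ℝ) 1, |K_d x|) ≤ κ)
    (ε₀ : ℝ) (M : ℕ)
    -- (a) for every δ ∈ (0, ε₀] the band is a union of at most M closed intervals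
    (ha : ∀ δ ∈ Ioc (0:ℝ) ε₀, ∃ a b : Fin M → ℝ,
      {s ∈ Icc (0:ℝ) 1 | |μ s - μ 0 - c| ≤ δ} = ⋃ j, Icc (a j) (b j))
    -- (b) the equation μ(t) - μ(0) = c has at most M solutions in [0,1]
    (hb : {s ∈ Icc (0:ℝ) 1 | μ s - μ 0 = c}.encard ≤ (M : ℕ∞))
    -- (c) m_{c+μ(0),δ}(μ) ≤ A δ^ι
    (A ι : ℝ) (hA : 0 < A)
    (hm : ∀ δ ∈ Ioc (0:ℝ) ε₀,
      (volume {s ∈ Icc (0:ℝ) 1 | |μ s - (c + μ 0)| ≤ δ}).toReal ≤ A * δ ^ ι) :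
    ∃ C > 0, ∀ N : ℕ, 1 ≤ N → ∀ h ∈ Ioc (0:ℝ) ε₀,
      |(1 / (N:ℝ)) * ∑ i ∈ Finset.Icc 1 N,
          (∫ u in Ioi c, (1 / h) * K_d ((μ ((i:ℝ) / (N:ℝ)) - μ 0 - u) / h)) -
        (volume {s ∈ Icc (0:ℝ) 1 | μ s - μ 0 > c}).toReal|
      ≤ C * max (h ^ ι) (1 / (N:ℝ)) := by
  have hκ : 0 ≤ κ + 1 := by
    linarith [(integral_nonneg fun x => abs_nonneg (K_d x)).trans hK_abs]
  refine ⟨(κ + 1) * M * (A + 1) + 2 * M + 1, by positivity, fun N hN h hh => ?_⟩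
  obtain ⟨a, b, hband⟩ := ha h hh
  have hband_vol : volume.real {s ∈ Icc (0 : ℝ) 1 | |μ s - μ 0 - c| ≤ h} ≤ A * h ^ ι := by
    simpa only [measureReal_def, sub_add_eq_sub_sub, sub_right_comm _ c] using hm h hh
  have hsmooth := abs_riemannSum_smoothedStep_sub_indicator_le hK_int hh.1 hK_supp hK_one hK_abs
    (f := fun s => μ s - μ 0) hN a b hband
  have hriemann := abs_riemannSum_indicator_sub_volume_le (f := fun s => μ s - μ 0)
    (hμ.sub continuousOn_const) hN hb
  set m := max (h ^ ι) (1 / (N : ℝ))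
  have hh_m : h ^ ι ≤ m := le_max_left _ _
  have hN_m : 1 / (N : ℝ) ≤ m := le_max_right _ _
  have hA' : 0 ≤ A := hA.le
  calc _ ≤ (κ + 1) * M * (A * h ^ ι + 1 / N) + 2 * M * (1 / N) := by
        rw [mul_one_div]
        exact (abs_sub_le _ _ _).trans (add_le_add (hsmooth.trans (by gcongr)) hriemann)
    _ ≤ (κ + 1) * M * (A * m + m) + 2 * M * m := by gcongr
    _ = ((κ + 1) * M * (A + 1) + 2 * M) * m := by ring
    _ ≤ ((κ + 1) * M * (A + 1) + 2 * M + 1) * m :=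
        mul_le_mul_of_nonneg_right (le_add_of_nonneg_right zero_le_one)
          (hN_m.trans' (by positivity))

/-- Proposition 2.1: deterministic approximation of the excess
measure `T_c⁺` by the smoothed Riemann sum `T⁺_{N,c,h}`. -/
theorem excess_measure_riemann_approx
    (μ : ℝ → ℝ) (hμ : ContinuousOn μ (Icc 0 1))
    (c : ℝ) (hc : 0 < c)
    (K_d : ℝ → ℝ) (κ : ℝ)
    (hK_int : Integrable K_d)
    (hK_supp : Function.support K_d ⊆ Icc (-1 : ℝ) 1)
    (hK_one : (∫ x in Icc (-1 : ℝ) 1, K_d x) = 1)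
    (hK_abs : (∫ x in Icc (-1 : ℝ) 1, |K_d x|) ≤ κ)
    (ε₀ : ℝ) (hε₀ : 0 < ε₀) (M : ℕ)
    -- (a) for every δ ∈ (0, ε₀] the band is a union of at most M closed intervals
    (ha : ∀ δ ∈ Ioc (0:ℝ) ε₀, ∃ a b : Fin M → ℝ,
      {s ∈ Icc (0:ℝ) 1 | |μ s - μ 0 - c| ≤ δ} = ⋃ j, Icc (a j) (b j))
    -- (b) the equation μ(t) - μ(0) = c has at most M solutions in [0,1]
    (hb : {s ∈ Icc (0:ℝ) 1 | μ s - μ 0 = c}.encard ≤ (M : ℕ∞))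
    -- (c) m_{c+μ(0),δ}(μ) ≤ A δ^ι
    (A ι : ℝ) (hA : 0 < A) (hι : 0 < ι)
    (hm : ∀ δ ∈ Ioc (0:ℝ) ε₀,
      (volume {s ∈ Icc (0:ℝ) 1 | |μ s - (c + μ 0)| ≤ δ}).toReal ≤ A * δ ^ ι) :
    ∃ C > 0, ∀ N : ℕ, 1 ≤ N → ∀ h ∈ Ioc (0:ℝ) ε₀,
      |(1 / (N:ℝ)) * ∑ i ∈ Finset.Icc 1 N,
          (∫ u in Ioi c, (1 / h) * K_d ((μ ((i:ℝ) / (N:ℝ)) - μ 0 - u) / h)) -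
        (volume {s ∈ Icc (0:ℝ) 1 | μ s - μ 0 > c}).toReal|
      ≤ C * max (h ^ ι) (1 / (N:ℝ)) :=
  excess_measure_riemann_approx_general μ hμ c K_d κ hK_int hK_supp hK_one hK_abs ε₀ M ha hb A ι hA
    hm
end

section
/- Let μ : [0,1] → ℝ, c > 0, and K_d : ℝ → ℝ be integrable with support contained in [−1,1], ∫_{−1}^{1} K_d(x)dx = 1 and ∫_{−1}^{1} |K_d(x)|dx ≤ κ. Then for every integer N ≥ 1 and every h > 0: |T⁺_{N,c,h} − (1/N)·Σ_{i=1}^{N} 1(μ(i/N) − μ(0) > c)| ≤ ((1+κ)/N) · card{i ∈ {1,…,N} : |μ(i/N) − μ(0) − c| ≤ h}. -/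
/-! The substitution `x = (a - u) / h` turns the smoothed term `∫_c^∞ h⁻¹ K((a - u) / h) du`
into `∫_{-∞}^{(a - c) / h} K`. Since `K` lives on `[-1, 1]` and has mass `1`, this is exactly
the indicator `1(a > c)` as soon as `|a - c| > h`; for the remaining sample points the
difference is at most `1 + ∫ |K| ≤ 1 + κ`. -/

open MeasureTheory Set

theorem integral_Ioi_rescaled_eq_integral_Iio (K : ℝ → ℝ) (a c : ℝ) {h : ℝ} (hh : 0 < h) :
    ∫ u in Ioi c, (1 / h) * K ((a - u) / h) = ∫ x in Iio ((a - c) / h), K x := by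
  have hind : (Ioi c).indicator (fun u => (1 / h) * K ((a - u) / h)) =
      fun u => (1 / h) * (Iio ((a - c) / h)).indicator K (a / h - u / h) := by
    ext u
    have hmem : u ∈ Ioi c ↔ a / h - u / h ∈ Iio ((a - c) / h) := by
      rw [mem_Ioi, mem_Iio, ← sub_div, div_lt_div_iff_of_pos_right hh]
      constructor <;> intro <;> linarith
    by_cases hu : u ∈ Ioi c
    · rw [indicator_of_mem hu, indicator_of_mem (hmem.1 hu), sub_div]
    · rw [indicator_of_notMem hu, indicator_of_notMem (mt hmem.2 hu), mul_zero]
  rw [← integral_indicator measurableSet_Ioi, ← integral_indicator measurableSet_Iio, hind,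
    integral_const_mul,
    Measure.integral_comp_div (fun y => (Iio ((a - c) / h)).indicator K (a / h - y)),
    integral_sub_left_eq_self, abs_of_pos hh, smul_eq_mul, ← mul_assoc,
    one_div_mul_cancel hh.ne', one_mul]

section Support

variable {X E : Type*} [MeasurableSpace X] {μ : Measure X} [NormedAddCommGroup E]
  [NormedSpace ℝ E] {f : X → E} {s : Set X}

theorem setIntegral_eq_integral_of_support_subset (hf : Function.support f ⊆ s) :
    ∫ x in s, f x ∂μ = ∫ x, f x ∂μ :=
  setIntegral_eq_integral_of_forall_compl_eq_zero fun _ hx =>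
    Function.notMem_support.mp fun hfx => hx (hf hfx)

theorem setIntegral_eq_zero_of_disjoint_support (hf : Disjoint (Function.support f) s) :
    ∫ x in s, f x ∂μ = 0 :=
  setIntegral_eq_zero_of_forall_eq_zero fun _ hx =>
    Function.notMem_support.mp fun hfx => hf.ne_of_mem hfx hx rfl

end Support

theorem abs_setIntegral_le_setIntegral_abs_of_support_subset {K : ℝ → ℝ} {s t : Set ℝ}
    (hK_int : Integrable K) (hK : Function.support K ⊆ t) :
    |∫ x in s, K x| ≤ ∫ x in t, |K x| := by
  have hsupp : Function.support (fun x => |K x|) ⊆ t :=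
    (Function.support_comp_subset abs_zero K).trans hK
  calc |∫ x in s, K x| ≤ ∫ x in s, |K x| := abs_integral_le_integral_abs
    _ ≤ ∫ x, |K x| := setIntegral_le_integral hK_int.abs (.of_forall fun _ => abs_nonneg _)
    _ = ∫ x in t, |K x| := (setIntegral_eq_integral_of_support_subset hsupp).symm

theorem integral_Iio_eq_ite_of_one_lt_abs {K : ℝ → ℝ}
    (hK_supp : Function.support K ⊆ Icc (-1) 1) (hK_one : ∫ x in Icc (-1 : ℝ) 1, K x = 1)
    {t : ℝ} (ht : 1 < |t|) : ∫ x in Iio t, K x = if 0 < t then 1 else 0 := by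
  rcases lt_abs.mp ht with ht | ht
  · rw [if_pos (by linarith), ← hK_one, setIntegral_eq_integral_of_support_subset hK_supp,
      setIntegral_eq_integral_of_support_subset
        (hK_supp.trans fun x hx => mem_Iio.mpr (hx.2.trans_lt ht))]
  · rw [if_neg (by linarith)]
    refine setIntegral_eq_zero_of_disjoint_support (disjoint_of_subset_left hK_supp ?_)
    exact Set.disjoint_left.mpr fun x hx hx' => by linarith [hx.1, mem_Iio.mp hx']

theorem integral_Ioi_rescaled_eq_ite_of_lt_abs_sub {K : ℝ → ℝ}
    (hK_supp : Function.support K ⊆ Icc (-1) 1) (hK_one : ∫ x in Icc (-1 : ℝ) 1, K x = 1)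
    {a c h : ℝ} (hh : 0 < h) (hband : h < |a - c|) :
    ∫ u in Ioi c, (1 / h) * K ((a - u) / h) = if a > c then 1 else 0 := by
  have ht : 1 < |(a - c) / h| := by rwa [abs_div, abs_of_pos hh, one_lt_div hh]
  rw [integral_Ioi_rescaled_eq_integral_Iio K a c hh,
    integral_Iio_eq_ite_of_one_lt_abs hK_supp hK_one ht]
  simp only [div_pos_iff_of_pos_right hh, sub_pos, gt_iff_lt]

theorem abs_integral_Ioi_rescaled_sub_ite_le {K : ℝ → ℝ} {κ : ℝ} (hK_int : Integrable K)
    (hK_supp : Function.support K ⊆ Icc (-1) 1) (hK_abs : ∫ x in Icc (-1 : ℝ) 1, |K x| ≤ κ)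
    (a c : ℝ) {h : ℝ} (hh : 0 < h) :
    |(∫ u in Ioi c, (1 / h) * K ((a - u) / h)) - if a > c then 1 else 0| ≤ 1 + κ := by
  rw [integral_Ioi_rescaled_eq_integral_Iio K a c hh]
  have hstep : |(if a > c then 1 else 0 : ℝ)| ≤ 1 := by split_ifs <;> norm_num
  calc _ ≤ |∫ x in Iio ((a - c) / h), K x| + |(if a > c then 1 else 0 : ℝ)| := abs_sub _ _
    _ ≤ κ + 1 := add_le_add
      ((abs_setIntegral_le_setIntegral_abs_of_support_subset hK_int hK_supp).trans hK_abs) hstep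
    _ = 1 + κ := add_comm _ _

theorem abs_sum_sub_sum_le_card_filter_mul {ι : Type*} {s : Finset ι} {f g : ι → ℝ}
    (p : ι → Prop) [DecidablePred p] {C : ℝ}
    (hoff : ∀ i ∈ s, ¬ p i → f i = g i) (hon : ∀ i ∈ s, p i → |f i - g i| ≤ C) :
    |∑ i ∈ s, f i - ∑ i ∈ s, g i| ≤ (s.filter p).card * C := by
  rw [← Finset.sum_sub_distrib, ← Finset.sum_filter_of_ne (p := p)
    fun i hi hne => by_contra fun hp => hne (sub_eq_zero.mpr (hoff i hi hp))]
  calc _ ≤ ∑ i ∈ s with p i, |f i - g i| := Finset.abs_sum_le_sum_abs _ _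
    _ ≤ (s.filter p).card • C := Finset.sum_le_card_nsmul _ _ _ fun i hi => by
          rw [Finset.mem_filter] at hi; exact hon i hi.1 hi.2
    _ = _ := nsmul_eq_mul _ _

theorem smoothed_vs_exact_riemann_general
    (μ : ℝ → ℝ) (c : ℝ)
    (K_d : ℝ → ℝ) (κ : ℝ)
    (hK_int : Integrable K_d)
    (hK_supp : Function.support K_d ⊆ Icc (-1 : ℝ) 1)
    (hK_one : (∫ x in Icc (-1 : ℝ) 1, K_d x) = 1)
    (hK_abs : (∫ x in Icc (-1 : ℝ) 1, |K_d x|) ≤ κ) :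
    ∀ N : ℕ, 1 ≤ N → ∀ h : ℝ, 0 < h →
      |(1 / (N:ℝ)) * ∑ i ∈ Finset.Icc 1 N,
          (∫ u in Ioi c, (1 / h) * K_d ((μ ((i:ℝ) / (N:ℝ)) - μ 0 - u) / h)) -
        (1 / (N:ℝ)) * ∑ i ∈ Finset.Icc 1 N,
          (if μ ((i:ℝ) / (N:ℝ)) - μ 0 > c then (1:ℝ) else 0)|
      ≤ ((1 + κ) / (N:ℝ)) *
          (((Finset.Icc 1 N).filter
            (fun i : ℕ => |μ ((i:ℝ) / (N:ℝ)) - μ 0 - c| ≤ h)).card : ℝ) := by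
  intro N _ h hh
  have hsum := abs_sum_sub_sum_le_card_filter_mul (s := Finset.Icc 1 N)
    (fun i : ℕ => |μ ((i:ℝ) / (N:ℝ)) - μ 0 - c| ≤ h)
    (fun i _ hi => integral_Ioi_rescaled_eq_ite_of_lt_abs_sub hK_supp hK_one hh (not_le.mp hi))
    (fun i _ _ => abs_integral_Ioi_rescaled_sub_ite_le hK_int hK_supp hK_abs _ c hh)
  rw [← mul_sub, abs_mul, abs_of_nonneg (by positivity)]
  exact (mul_le_mul_of_nonneg_left hsum (by positivity)).trans_eq (by ring)

/-- the smoothed Riemann sum differs from the exact Riemann sum of the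
indicator only at sample points lying in the `h`-band around the level `c`. -/
theorem smoothed_vs_exact_riemann
    (μ : ℝ → ℝ) (c : ℝ) (hc : 0 < c)
    (K_d : ℝ → ℝ) (κ : ℝ)
    (hK_int : Integrable K_d)
    (hK_supp : Function.support K_d ⊆ Icc (-1 : ℝ) 1)
    (hK_one : (∫ x in Icc (-1 : ℝ) 1, K_d x) = 1)
    (hK_abs : (∫ x in Icc (-1 : ℝ) 1, |K_d x|) ≤ κ) :
    ∀ N : ℕ, 1 ≤ N → ∀ h : ℝ, 0 < h →
      |(1 / (N:ℝ)) * ∑ i ∈ Finset.Icc 1 N,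
          (∫ u in Ioi c, (1 / h) * K_d ((μ ((i:ℝ) / (N:ℝ)) - μ 0 - u) / h)) -
        (1 / (N:ℝ)) * ∑ i ∈ Finset.Icc 1 N,
          (if μ ((i:ℝ) / (N:ℝ)) - μ 0 > c then (1:ℝ) else 0)|
      ≤ ((1 + κ) / (N:ℝ)) *
          (((Finset.Icc 1 N).filter
            (fun i : ℕ => |μ ((i:ℝ) / (N:ℝ)) - μ 0 - c| ≤ h)).card : ℝ) :=
  smoothed_vs_exact_riemann_general μ c K_d κ hK_int hK_supp hK_one hK_abs
end

section
/- Suppose (μ, m) has critical root structure with roots 0 < t_1 < … < t_k < 1 of orders v_1, …, v_k, and set v = max_{1 ≤ l ≤ k} v_l. Then there exist constants C > 0 and h₀ > 0 such that for every h ∈ (0, h₀]: λ({s ∈ [0,1] : |μ(s) − m| ≤ h}) ≤ C · h^{1/(v+1)}. -/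
/-!
Near a root `t l` of order `n = v l`, the Taylor expansion of `μ - m` starts with the nonzero term
`μ^{(n+1)}(t l) (x - t l)^{n+1} / (n+1)!`, and the Lipschitz bound on `μ^{(n+1)}` controls the
remainder by `|x - t l|^{n+2}`; hence `|μ x - m| ≥ κ |x - t l|^{n+1}` close to `t l`. Monotonicity on
both sides of `t l` extends this to the whole `γ`-neighbourhood: a point there with `|μ x - m| ≤ h`
lies within `O(h^{1/(n+1)})` of `t l`. Away from the roots `|μ - m| ≥ ε`, so for small `h` the band
is covered by `k` intervals of length `O(h^{1/(v+1)})`.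
-/

open MeasureTheory Set

/-- The extended root sequence: `t₀ = 0`, `t_{k+1} = 1`, and the given roots in between. -/
noncomputable def extRoots (k : ℕ) (t : ℕ → ℝ) : ℕ → ℝ :=
  fun i => if i = 0 then 0 else if i ≤ k then t i else 1

/-- `(μ, m)` has critical root structure with roots `0 < t 1 < … < t k < 1` of orders
`v 1, …, v k` and gap parameter `γ = (1/2)·min_{0 ≤ i ≤ k} (t_{i+1} - t_i)`
(with the convention `t 0 = 0`, `t (k+1) = 1`). -/
structure CriticalRootStructure (μ : ℝ → ℝ) (m : ℝ) (k : ℕ) (t : ℕ → ℝ)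
    (v : ℕ → ℕ) (γ : ℝ) : Prop where
  k_pos : 0 < k
  mono : ∀ i j, 1 ≤ i → i < j → j ≤ k → t i < t j
  first_pos : 0 < t 1
  last_lt : t k < 1
  gamma_eq : γ = (1 / 2) * ((Finset.Icc 0 k).inf' (Finset.nonempty_Icc.mpr (Nat.zero_le k))
      fun i => extRoots k t (i + 1) - extRoots k t i)
  root : ∀ l, 1 ≤ l → l ≤ k → μ (t l) = m
  -- (i) μ is (v l + 1)-times differentiable on [t l - γ, t l + γ] ...
  diffble : ∀ l, 1 ≤ l → l ≤ k → ∀ j ≤ v l,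
      DifferentiableOn ℝ (iteratedDerivWithin j μ (Icc (t l - γ) (t l + γ)))
        (Icc (t l - γ) (t l + γ))
  -- ... with μ^{(j)}(t l) = 0 for 1 ≤ j ≤ v l ...
  deriv_zero : ∀ l, 1 ≤ l → l ≤ k → ∀ j, 1 ≤ j → j ≤ v l →
      iteratedDerivWithin j μ (Icc (t l - γ) (t l + γ)) (t l) = 0
  -- ... μ^{(v l + 1)}(t l) ≠ 0 ...
  deriv_ne : ∀ l, 1 ≤ l → l ≤ k →
      iteratedDerivWithin (v l + 1) μ (Icc (t l - γ) (t l + γ)) (t l) ≠ 0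
  -- ... and μ^{(v l + 1)} Lipschitz continuous on [t l - γ, t l + γ].
  deriv_lip : ∀ l, 1 ≤ l → l ≤ k → ∃ C : NNReal,
      LipschitzOnWith C (iteratedDerivWithin (v l + 1) μ (Icc (t l - γ) (t l + γ)))
        (Icc (t l - γ) (t l + γ))
  -- (ii) μ strictly monotone on [t l - γ, t l] and on [t l, t l + γ].
  mono_left : ∀ l, 1 ≤ l → l ≤ k →
      StrictMonoOn μ (Icc (t l - γ) (t l)) ∨ StrictAntiOn μ (Icc (t l - γ) (t l))
  mono_right : ∀ l, 1 ≤ l → l ≤ k →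
      StrictMonoOn μ (Icc (t l) (t l + γ)) ∨ StrictAntiOn μ (Icc (t l) (t l + γ))
  -- (iii) |μ - m| bounded away from 0 outside the γ-neighbourhoods of the roots.
  sep : ∃ ε > 0, ∀ s ∈ Icc (0:ℝ) 1,
      (∀ l, 1 ≤ l → l ≤ k → γ < |s - t l|) → ε ≤ |μ s - m|

open scoped Nat

theorem hasDerivAt_mul_sub_pow_div_factorial (a c x : ℝ) (i : ℕ) :
    HasDerivAt (fun y => a * (y - c) ^ (i + 1) / (i + 1)!) (a * (x - c) ^ i / i !) x := by
  refine ((((hasDerivAt_id x).sub_const c).pow (i + 1)).const_mul a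
    |>.div_const ((i + 1)! : ℝ)).congr_deriv ?_
  rw [Nat.factorial_succ]
  push_cast
  field_simp
  simp

theorem abs_sub_le_mul_pow_of_abs_deriv_le {g g' : ℝ → ℝ} {s : Set ℝ} (hs : s.OrdConnected)
    {c K : ℝ} {i : ℕ} (hK : 0 ≤ K) (hc : c ∈ s) (hg : ∀ u ∈ s, HasDerivWithinAt g (g' u) s u)
    (hg' : ∀ u ∈ s, |g' u| ≤ K * |u - c| ^ i) {x : ℝ} (hx : x ∈ s) :
    |g x - g c| ≤ K * |x - c| ^ (i + 1) := by
  have hsub : uIcc c x ⊆ s := hs.uIcc_subset hc hx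
  have hbound : ∀ u ∈ uIcc c x, ‖g' u‖ ≤ K * |x - c| ^ i := fun u hu =>
    (hg' u (hsub hu)).trans <| mul_le_mul_of_nonneg_left
      (pow_le_pow_left₀ (abs_nonneg _) (abs_sub_left_of_mem_uIcc hu) i) hK
  have := (convex_uIcc c x).norm_image_sub_le_of_norm_hasDerivWithin_le
    (fun u hu => (hg u (hsub hu)).mono hsub) hbound left_mem_uIcc right_mem_uIcc
  rw [pow_succ, ← mul_assoc]
  simpa only [Real.norm_eq_abs] using this

theorem abs_sub_sub_taylor_le_of_lipschitzOnWith {f : ℝ → ℝ} {s : Set ℝ} (hs : s.OrdConnected)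
    {c : ℝ} (hc : c ∈ s) {n : ℕ} {L : NNReal}
    (hdiff : ∀ j ≤ n, DifferentiableOn ℝ (iteratedDerivWithin j f s) s)
    (hzero : ∀ j, 1 ≤ j → j ≤ n → iteratedDerivWithin j f s c = 0)
    (hlip : LipschitzOnWith L (iteratedDerivWithin (n + 1) f s) s) {x : ℝ} (hx : x ∈ s) :
    |f x - f c - iteratedDerivWithin (n + 1) f s c * (x - c) ^ (n + 1) / (n + 1)!| ≤
      L * |x - c| ^ (n + 2) := by
  set F : ℕ → ℝ → ℝ := fun j => iteratedDerivWithin j f s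
  set a := F (n + 1) c
  -- integrating the bound on `F (j + 1) - a (· - c) ^ i / i!` once gains one power of `|· - c|`
  have step : ∀ i j, i + j = n →
      (∀ u ∈ s, |F (j + 1) u - a * (u - c) ^ i / i !| ≤ L * |u - c| ^ (i + 1)) →
      ∀ x ∈ s, |F j x - F j c - a * (x - c) ^ (i + 1) / (i + 1)!| ≤ L * |x - c| ^ (i + 2) := by
    intro i j hij hbound x hx
    have hderiv : ∀ u ∈ s, HasDerivWithinAt (fun y => F j y - a * (y - c) ^ (i + 1) / (i + 1)!)
        (F (j + 1) u - a * (u - c) ^ i / i !) s u := fun u hu => by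
      refine HasDerivWithinAt.sub ?_ (hasDerivAt_mul_sub_pow_div_factorial a c u i).hasDerivWithinAt
      simpa only [F, iteratedDerivWithin_succ] using (hdiff j (by omega) u hu).hasDerivWithinAt
    have := abs_sub_le_mul_pow_of_abs_deriv_le hs L.coe_nonneg hc hderiv hbound hx
    simpa [sub_right_comm] using this
  have claim : ∀ i ≤ n, ∀ x ∈ s,
      |F (n - i) x - F (n - i) c - a * (x - c) ^ (i + 1) / (i + 1)!| ≤ L * |x - c| ^ (i + 2) := by
    intro i
    induction i with
    | zero =>
      refine fun _ => step 0 n (zero_add n) fun u hu => ?_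
      simpa [Real.dist_eq] using hlip.dist_le_mul u hu c hc
    | succ i ih =>
      intro hi
      refine step (i + 1) (n - (i + 1)) (by omega) fun u hu => ?_
      rw [show n - (i + 1) + 1 = n - i by omega]
      have hFc : F (n - i) c = 0 := hzero (n - i) (by omega) (by omega)
      simpa [hFc] using ih (by omega) u hu
  simpa [F] using claim n le_rfl x hx

theorem exists_mul_pow_le_abs_sub_of_iteratedDerivWithin_ne_zero {f : ℝ → ℝ} {s : Set ℝ}
    (hs : s.OrdConnected) {c : ℝ} (hc : c ∈ s) {n : ℕ} {L : NNReal}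
    (hdiff : ∀ j ≤ n, DifferentiableOn ℝ (iteratedDerivWithin j f s) s)
    (hzero : ∀ j, 1 ≤ j → j ≤ n → iteratedDerivWithin j f s c = 0)
    (hne : iteratedDerivWithin (n + 1) f s c ≠ 0)
    (hlip : LipschitzOnWith L (iteratedDerivWithin (n + 1) f s) s) :
    ∃ κ > 0, ∃ δ > 0, ∀ x ∈ s, |x - c| ≤ δ → κ * |x - c| ^ (n + 1) ≤ |f x - f c| := by
  set a := iteratedDerivWithin (n + 1) f s c
  set κ := |a| / (2 * (n + 1)!)
  have hκ : 0 < κ := by positivity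
  refine ⟨κ, hκ, κ / (L + 1), by positivity, fun x hx hxc => ?_⟩
  set r := |x - c|
  have hleading : |a * (x - c) ^ (n + 1) / (n + 1)!| = 2 * κ * r ^ (n + 1) := by
    rw [abs_div, abs_mul, abs_pow, Nat.abs_cast]
    simp only [κ, r]
    field_simp
  have hremainder : (L : ℝ) * r ^ (n + 2) ≤ κ * r ^ (n + 1) := calc
    (L : ℝ) * r ^ (n + 2) ≤ (L + 1) * r * r ^ (n + 1) := by
      rw [pow_succ' r (n + 1), ← mul_assoc]
      gcongr
      linarith
    _ ≤ κ * r ^ (n + 1) := by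
      gcongr
      exact (le_div_iff₀' (by positivity)).mp hxc
  have := abs_sub_abs_le_abs_sub (a * (x - c) ^ (n + 1) / (n + 1)!) (f x - f c)
  have := abs_sub_sub_taylor_le_of_lipschitzOnWith hs hc hdiff hzero hlip hx
  rw [abs_sub_comm] at this
  linarith

theorem MonotoneOn.abs_sub_le_abs_sub_of_mem_uIcc {f : ℝ → ℝ} {s : Set ℝ} (hf : MonotoneOn f s)
    {c x y : ℝ} (hc : c ∈ s) (hx : x ∈ s) (hy : y ∈ s) (hyx : y ∈ uIcc c x) :
    |f y - f c| ≤ |f x - f c| := by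
  rcases le_total c x with hcx | hxc
  · rw [uIcc_of_le hcx] at hyx
    have h₁ := hf hc hy hyx.1
    have h₂ := hf hy hx hyx.2
    rw [abs_of_nonneg (by linarith), abs_of_nonneg (by linarith)]
    linarith
  · rw [uIcc_of_ge hxc] at hyx
    have h₁ := hf hx hy hyx.1
    have h₂ := hf hy hc hyx.2
    rw [abs_of_nonpos (by linarith), abs_of_nonpos (by linarith)]
    linarith

theorem abs_sub_le_abs_sub_of_mem_uIcc {f : ℝ → ℝ} {s : Set ℝ}
    (hf : MonotoneOn f s ∨ AntitoneOn f s) {c x y : ℝ} (hc : c ∈ s) (hx : x ∈ s) (hy : y ∈ s)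
    (hyx : y ∈ uIcc c x) : |f y - f c| ≤ |f x - f c| := by
  rcases hf with hf | hf
  · exact hf.abs_sub_le_abs_sub_of_mem_uIcc hc hx hy hyx
  · simpa [abs_sub_comm, neg_add_eq_sub] using hf.neg.abs_sub_le_abs_sub_of_mem_uIcc hc hx hy hyx

theorem le_inv_rpow_mul_rpow_of_mul_pow_le {r κ h : ℝ} {n N : ℕ} (hnN : n ≤ N) (hr : 0 ≤ r)
    (hκ : 0 < κ) (hh : 0 < h) (hh₁ : h ≤ 1) (hrh : κ * r ^ (n + 1) ≤ h) :
    r ≤ (κ ^ ((1 : ℝ) / ((n : ℝ) + 1)))⁻¹ * h ^ ((1 : ℝ) / ((N : ℝ) + 1)) := calc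
  r ≤ (h / κ) ^ ((1 : ℝ) / ((n : ℝ) + 1)) := by
    rw [one_div, Real.le_rpow_inv_iff_of_pos hr (by positivity) (by positivity), le_div_iff₀' hκ]
    exact_mod_cast hrh
  _ = (κ ^ ((1 : ℝ) / ((n : ℝ) + 1)))⁻¹ * h ^ ((1 : ℝ) / ((n : ℝ) + 1)) := by
    rw [Real.div_rpow hh.le hκ.le, div_eq_inv_mul]
  _ ≤ (κ ^ ((1 : ℝ) / ((n : ℝ) + 1)))⁻¹ * h ^ ((1 : ℝ) / ((N : ℝ) + 1)) := by
    refine mul_le_mul_of_nonneg_left (Real.rpow_le_rpow_of_exponent_ge hh hh₁ ?_) (by positivity)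
    gcongr

theorem exists_abs_sub_le_mul_rpow_of_abs_sub_le {f : ℝ → ℝ} {c γ κ δ : ℝ} {n N : ℕ}
    (hnN : n ≤ N) (hγ : 0 < γ) (hκ : 0 < κ) (hδ : 0 < δ)
    (hlower : ∀ x ∈ Icc (c - γ) (c + γ), |x - c| ≤ δ → κ * |x - c| ^ (n + 1) ≤ |f x - f c|)
    (hleft : MonotoneOn f (Icc (c - γ) c) ∨ AntitoneOn f (Icc (c - γ) c))
    (hright : MonotoneOn f (Icc c (c + γ)) ∨ AntitoneOn f (Icc c (c + γ))) :
    ∃ C > 0, ∃ h₀ > 0, ∀ h ∈ Ioc 0 h₀, ∀ x ∈ Icc (c - γ) (c + γ), |f x - f c| ≤ h →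
      |x - c| ≤ C * h ^ ((1 : ℝ) / ((N : ℝ) + 1)) := by
  set δ' := min δ γ
  have hδ' : 0 < δ' := lt_min hδ hγ
  have hδ'γ : δ' ≤ γ := min_le_right _ _
  refine ⟨(κ ^ ((1 : ℝ) / ((n : ℝ) + 1)))⁻¹, by positivity, min (κ * δ' ^ (n + 1) / 2) 1,
    by positivity, ?_⟩
  rintro h ⟨hh, hh₀⟩ x hx hfx
  have hsmall : h < κ * δ' ^ (n + 1) := by
    linarith [hh₀.trans (min_le_left _ _), show 0 < κ * δ' ^ (n + 1) by positivity]
  -- `|f - f c|` grows away from `c`, so it exceeds `h` beyond `c ± δ'`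
  have hnear : |x - c| ≤ δ' := by
    by_contra! hfar
    have hfar_of : ∀ y ∈ Icc (c - γ) (c + γ), |y - c| = δ' → |f y - f c| ≤ |f x - f c| → False :=
      fun y hy hyc hyx => by
        have := hlower y hy (hyc ▸ min_le_left _ _)
        rw [hyc] at this
        linarith
    rcases le_total c x with hcx | hxc
    · rw [abs_of_nonneg (by linarith)] at hfar
      refine hfar_of (c + δ') ⟨by linarith, by linarith⟩ (by simp [hδ'.le]) ?_
      exact abs_sub_le_abs_sub_of_mem_uIcc hright ⟨le_rfl, by linarith⟩ ⟨hcx, hx.2⟩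
        ⟨by linarith, by linarith⟩ (by rw [uIcc_of_le hcx]; constructor <;> linarith)
    · rw [abs_of_nonpos (by linarith)] at hfar
      refine hfar_of (c - δ') ⟨by linarith, by linarith⟩ (by simp [abs_of_pos hδ']) ?_
      exact abs_sub_le_abs_sub_of_mem_uIcc hleft ⟨by linarith, le_rfl⟩ ⟨hx.1, hxc⟩
        ⟨by linarith, by linarith⟩ (by rw [uIcc_of_ge hxc]; constructor <;> linarith)
  exact le_inv_rpow_mul_rpow_of_mul_pow_le hnN (abs_nonneg _) hκ hh (hh₀.trans (min_le_right _ _))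
    ((hlower x hx (hnear.trans (min_le_left _ _))).trans hfx)

theorem volume_toReal_le_of_subset_biUnion_closedBall {ι : Type*} (I : Finset ι) (x r : ι → ℝ)
    (hr : ∀ i ∈ I, 0 ≤ r i) {A : Set ℝ} (hA : A ⊆ ⋃ i ∈ I, Metric.closedBall (x i) (r i)) :
    (volume A).toReal ≤ ∑ i ∈ I, 2 * r i := by
  refine ENNReal.toReal_le_of_le_ofReal (I.sum_nonneg fun i hi => by linarith [hr i hi]) ?_
  calc volume A ≤ ∑ i ∈ I, volume (Metric.closedBall (x i) (r i)) :=
        (measure_mono hA).trans (measure_biUnion_finset_le I _)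
    _ = ENNReal.ofReal (∑ i ∈ I, 2 * r i) := by
        simp only [Real.volume_closedBall]
        exact (ENNReal.ofReal_sum_of_nonneg fun i hi => by linarith [hr i hi]).symm

namespace CriticalRootStructure

variable {μ : ℝ → ℝ} {m : ℝ} {k : ℕ} {t : ℕ → ℝ} {v : ℕ → ℕ} {γ : ℝ}

theorem extRoots_lt_succ (hcrs : CriticalRootStructure μ m k t v γ) {i : ℕ} (hi : i ≤ k) :
    extRoots k t i < extRoots k t (i + 1) := by
  unfold extRoots
  split_ifs <;> first
    | contradiction
    | exact one_pos
    | (subst_vars; exact hcrs.first_pos)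
    | exact hcrs.mono i (i + 1) (by omega) (by omega) ‹_›
    | (rw [show i = k by omega]; exact hcrs.last_lt)

theorem gamma_pos (hcrs : CriticalRootStructure μ m k t v γ) : 0 < γ := by
  rw [hcrs.gamma_eq]
  exact mul_pos one_half_pos <| (Finset.lt_inf'_iff _).mpr fun i hi =>
    sub_pos.mpr (hcrs.extRoots_lt_succ (Finset.mem_Icc.mp hi).2)

theorem exists_abs_sub_le_mul_rpow (hcrs : CriticalRootStructure μ m k t v γ) {l : ℕ}
    (hl : l ∈ Finset.Icc 1 k) :
    ∃ C > 0, ∃ h₀ > 0, ∀ h ∈ Ioc 0 h₀, ∀ x ∈ Icc (t l - γ) (t l + γ), |μ x - m| ≤ h →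
      |x - t l| ≤ C * h ^ ((1 : ℝ) / ((((Finset.Icc 1 k).sup v : ℕ) : ℝ) + 1)) := by
  obtain ⟨hl₁, hlk⟩ := Finset.mem_Icc.mp hl
  have hγ := hcrs.gamma_pos
  obtain ⟨L, hL⟩ := hcrs.deriv_lip l hl₁ hlk
  obtain ⟨κ, hκ, δ, hδ, hlower⟩ := exists_mul_pow_le_abs_sub_of_iteratedDerivWithin_ne_zero
    ordConnected_Icc ⟨by linarith, by linarith⟩ (hcrs.diffble l hl₁ hlk)
    (hcrs.deriv_zero l hl₁ hlk) (hcrs.deriv_ne l hl₁ hlk) hL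
  have := exists_abs_sub_le_mul_rpow_of_abs_sub_le (Finset.le_sup hl) hγ hκ hδ hlower
    ((hcrs.mono_left l hl₁ hlk).imp StrictMonoOn.monotoneOn StrictAntiOn.antitoneOn)
    ((hcrs.mono_right l hl₁ hlk).imp StrictMonoOn.monotoneOn StrictAntiOn.antitoneOn)
  rwa [hcrs.root l hl₁ hlk] at this

end CriticalRootStructure

/-- Lemma B.1, measure bound: the Lebesgue measure of the `h`-band of the
level set is `O(h^{1/(v+1)})`, where `v` is the maximal critical order. -/
theorem level_set_band_measure_bound
    (μ : ℝ → ℝ) (m : ℝ) (k : ℕ) (t : ℕ → ℝ) (v : ℕ → ℕ) (γ : ℝ)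
    (hcrs : CriticalRootStructure μ m k t v γ) :
    ∃ C > 0, ∃ h₀ > 0, ∀ h ∈ Ioc (0:ℝ) h₀,
      (volume {s ∈ Icc (0:ℝ) 1 | |μ s - m| ≤ h}).toReal ≤
        C * h ^ ((1:ℝ) / ((((Finset.Icc 1 k).sup v : ℕ) : ℝ) + 1)) := by
  set β : ℝ := (1:ℝ) / ((((Finset.Icc 1 k).sup v : ℕ) : ℝ) + 1)
  obtain ⟨ε, hε, hsep⟩ := hcrs.sep
  choose! C hC h₀ hh₀ hband using fun l (hl : l ∈ Finset.Icc 1 k) =>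
    hcrs.exists_abs_sub_le_mul_rpow hl
  have hne : (Finset.Icc 1 k).Nonempty := Finset.nonempty_Icc.mpr hcrs.k_pos
  refine ⟨∑ l ∈ Finset.Icc 1 k, 2 * C l, Finset.sum_pos (fun l hl => by linarith [hC l hl]) hne,
    min (ε / 2) ((Finset.Icc 1 k).inf' hne h₀),
    lt_min (half_pos hε) ((Finset.lt_inf'_iff hne).mpr hh₀), ?_⟩
  rintro h ⟨hh, hhle⟩
  have hcover : {s ∈ Icc (0:ℝ) 1 | |μ s - m| ≤ h} ⊆
      ⋃ l ∈ Finset.Icc 1 k, Metric.closedBall (t l) (C l * h ^ β) := by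
    rintro s ⟨hs, hμs⟩
    obtain ⟨l, hl₁, hlk, hsl⟩ : ∃ l, 1 ≤ l ∧ l ≤ k ∧ |s - t l| ≤ γ := by
      by_contra! hfar
      linarith [hsep s hs hfar, hhle.trans (min_le_left _ _)]
    have hl : l ∈ Finset.Icc 1 k := Finset.mem_Icc.mpr ⟨hl₁, hlk⟩
    refine mem_biUnion hl (Metric.mem_closedBall.mpr ?_)
    rw [abs_sub_comm, Set.mem_Icc_iff_abs_le] at hsl
    exact hband l hl h ⟨hh, hhle.trans ((min_le_right _ _).trans (Finset.inf'_le _ hl))⟩ s hsl hμs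
  calc _ ≤ ∑ l ∈ Finset.Icc 1 k, 2 * (C l * h ^ β) :=
        volume_toReal_le_of_subset_biUnion_closedBall _ _ _
          (fun l hl => mul_nonneg (hC l hl).le (by positivity)) hcover
    _ = _ := by simp only [Finset.sum_mul, mul_assoc]
end

section
/- Let v ∈ ℕ, t₀ ∈ ℝ, δ > 0 and let g be (v+1)-times differentiable on [t₀ − δ, t₀ + δ] with g(t₀) = 0, g^{(j)}(t₀) = 0 for 1 ≤ j ≤ v, g^{(v+1)}(t₀) ≠ 0, and g^{(v+1)} Lipschitz continuous on [t₀ − δ, t₀ + δ]. Then there exist constants M > 0 and δ' ∈ (0, δ] such that for every h > 0 and every s with |s − t₀| ≤ δ' and |g(s)| ≤ h one has |s − t₀|^{v+1} ≤ M·h. -/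
/-!
Since `g` and its first `v` derivatives vanish at `t₀`, Taylor's theorem with the Lagrange
remainder gives `g s = g^{(v+1)}(ξ) (s - t₀)^{v+1} / (v+1)!` for some `ξ` between `t₀`
and `s`. Lipschitz continuity keeps `|g^{(v+1)}(ξ)| ≥ |g^{(v+1)}(t₀)| / 2` once `|s - t₀|`
is small, so `|s - t₀|^{v+1} ≤ 2 (v+1)! / |g^{(v+1)}(t₀)| · |g s|`.
-/

open Set
open scoped Nat

section IteratedDerivWithin

variable {𝕜 F : Type*} [NontriviallyNormedField 𝕜] [NormedAddCommGroup F] [NormedSpace 𝕜 F]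
  {f : 𝕜 → F} {s t : Set 𝕜} {x : 𝕜} {n : ℕ}

theorem iteratedDerivWithin_eq_of_subset (st : s ⊆ t) (hs : UniqueDiffOn 𝕜 s)
    (ht : UniqueDiffOn 𝕜 t) (hf : ContDiffOn 𝕜 n f t) (hx : x ∈ s) :
    iteratedDerivWithin n f s x = iteratedDerivWithin n f t x := by
  simp only [iteratedDerivWithin_eq_iteratedFDerivWithin,
    iteratedFDerivWithin_subset st hs ht hf hx]

theorem contDiffOn_succ_of_differentiableOn_iteratedDerivWithin (hs : UniqueDiffOn 𝕜 s)
    (hdiff : ∀ m ≤ n, DifferentiableOn 𝕜 (iteratedDerivWithin m f s) s)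
    (hcont : ContinuousOn (iteratedDerivWithin (n + 1) f s) s) :
    ContDiffOn 𝕜 (n + 1) f s := by
  rw [← Nat.cast_succ, contDiffOn_nat_iff_continuousOn_differentiableOn_deriv hs]
  refine ⟨fun m hm => ?_, fun m hm => hdiff m (Nat.lt_succ_iff.mp hm)⟩
  rcases Nat.of_le_succ hm with hm | rfl
  exacts [(hdiff m hm).continuousOn, hcont]

end IteratedDerivWithin

theorem taylorWithinEval_eq_zero {E : Type*} [NormedAddCommGroup E] [NormedSpace ℝ E]
    {f : ℝ → E} {n : ℕ} {s : Set ℝ} {x₀ : ℝ}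
    (h : ∀ k ≤ n, iteratedDerivWithin k f s x₀ = 0) (x : ℝ) :
    taylorWithinEval f n s x₀ x = 0 := by
  rw [taylor_within_apply]
  refine Finset.sum_eq_zero fun k hk => ?_
  rw [h k (Nat.lt_succ_iff.mp (Finset.mem_range.mp hk)), smul_zero]

theorem taylor_mean_remainder_lagrange_of_iteratedDerivWithin_eq_zero
    {f : ℝ → ℝ} {S : Set ℝ} {n : ℕ} {x₀ x : ℝ} (hS : UniqueDiffOn ℝ S)
    (hf : ContDiffOn ℝ (n + 1) f S) (hsub : uIcc x₀ x ⊆ S)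
    (hzero : ∀ k ≤ n, iteratedDerivWithin k f S x₀ = 0) :
    ∃ ξ ∈ uIcc x₀ x,
      f x = iteratedDerivWithin (n + 1) f S ξ * (x - x₀) ^ (n + 1) / (n + 1)! := by
  rcases eq_or_ne x₀ x with rfl | hx
  · refine ⟨x₀, left_mem_uIcc, ?_⟩
    simpa [iteratedDerivWithin_zero] using hzero 0 (Nat.zero_le n)
  have hI : UniqueDiffOn ℝ (uIcc x₀ x) := uniqueDiffOn_uIcc hx
  have hderiv_eq : ∀ k ≤ n + 1, ∀ y ∈ uIcc x₀ x,
      iteratedDerivWithin k f (uIcc x₀ x) y = iteratedDerivWithin k f S y := fun k hk y hy =>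
    iteratedDerivWithin_eq_of_subset hsub hI hS (hf.of_le (by exact_mod_cast hk)) hy
  have hfI : ContDiffOn ℝ (n + 1) f (uIcc x₀ x) := hf.mono hsub
  obtain ⟨ξ, hξ, htaylor⟩ :=
    taylor_mean_remainder_lagrange (n := n) hx (hfI.of_le (by norm_cast; omega))
    ((hfI.differentiableOn_iteratedDerivWithin (by norm_cast; omega) hI).mono Ioo_subset_Icc_self)
  have hpoly : taylorWithinEval f n (uIcc x₀ x) x₀ x = 0 := taylorWithinEval_eq_zero
    (fun k hk => (hderiv_eq k (by omega) x₀ left_mem_uIcc).trans (hzero k hk)) x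
  refine ⟨ξ, Ioo_subset_Icc_self hξ, ?_⟩
  rwa [hpoly, sub_zero, hderiv_eq (n + 1) le_rfl ξ (Ioo_subset_Icc_self hξ)] at htaylor

theorem LipschitzOnWith.exists_half_abs_le_abs {u : ℝ → ℝ} {C : NNReal} {S : Set ℝ}
    {x₀ δ : ℝ} (hu : LipschitzOnWith C u S) (hx₀ : x₀ ∈ S) (hδ : 0 < δ)
    (hne : u x₀ ≠ 0) :
    ∃ δ' ∈ Ioc 0 δ, ∀ ξ ∈ S, |ξ - x₀| ≤ δ' → |u x₀| / 2 ≤ |u ξ| := by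
  refine ⟨min δ (|u x₀| / (2 * (C + 1))), ⟨by positivity, min_le_left _ _⟩,
    fun ξ hξ hdist => ?_⟩
  have hlip : |u ξ - u x₀| ≤ C * |ξ - x₀| := by
    simpa only [Real.dist_eq] using hu.dist_le_mul ξ hξ x₀ hx₀
  have hCdist : C * |ξ - x₀| ≤ |u x₀| / 2 := calc
    C * |ξ - x₀| ≤ (C + 1) * (|u x₀| / (2 * (C + 1))) :=
      mul_le_mul (by simp) (hdist.trans (min_le_right _ _)) (abs_nonneg _)
        (by positivity)
    _ = |u x₀| / 2 := by field_simp
  linarith [abs_sub_abs_le_abs_sub (u x₀) (u ξ), abs_sub_comm (u x₀) (u ξ)]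

/-- local level-set inclusion at a critical root of order `v`
(the inclusion `A_{n,l} ⊆ B_{n,l,M}` in the proof of Lemma B.1). -/
theorem local_level_band_inclusion
    (v : ℕ) (t₀ δ : ℝ) (hδ : 0 < δ) (g : ℝ → ℝ)
    (hg0 : g t₀ = 0)
    (hdiff : ∀ j ≤ v, DifferentiableOn ℝ
      (iteratedDerivWithin j g (Icc (t₀ - δ) (t₀ + δ))) (Icc (t₀ - δ) (t₀ + δ)))
    (hderiv0 : ∀ j, 1 ≤ j → j ≤ v →
      iteratedDerivWithin j g (Icc (t₀ - δ) (t₀ + δ)) t₀ = 0)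
    (hderivne : iteratedDerivWithin (v + 1) g (Icc (t₀ - δ) (t₀ + δ)) t₀ ≠ 0)
    (hlip : ∃ C : NNReal, LipschitzOnWith C
      (iteratedDerivWithin (v + 1) g (Icc (t₀ - δ) (t₀ + δ))) (Icc (t₀ - δ) (t₀ + δ))) :
    ∃ M > (0:ℝ), ∃ δ' ∈ Ioc (0:ℝ) δ, ∀ h : ℝ, 0 < h → ∀ s : ℝ,
      |s - t₀| ≤ δ' → |g s| ≤ h → |s - t₀| ^ (v + 1) ≤ M * h := by
  obtain ⟨C, hC⟩ := hlip
  set S := Icc (t₀ - δ) (t₀ + δ)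
  set D := iteratedDerivWithin (v + 1) g S
  have hS : UniqueDiffOn ℝ S := uniqueDiffOn_Icc (by linarith)
  have hg : ContDiffOn ℝ (v + 1) g S :=
    contDiffOn_succ_of_differentiableOn_iteratedDerivWithin hS hdiff hC.continuousOn
  have hzero : ∀ k ≤ v, iteratedDerivWithin k g S t₀ = 0 := fun k hk => by
    rcases Nat.eq_zero_or_pos k with rfl | hk0
    exacts [hg0, hderiv0 k hk0 hk]
  have ht₀ : t₀ ∈ S := ⟨by linarith, by linarith⟩
  obtain ⟨δ', ⟨hδ'0, hδ'δ⟩, hDξ⟩ := hC.exists_half_abs_le_abs ht₀ hδ hderivne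
  refine ⟨2 * (v + 1)! / |D t₀|, by positivity, δ', ⟨hδ'0, hδ'δ⟩,
    fun h _ s hs hgs => ?_⟩
  have hsδ := abs_sub_le_iff.mp (hs.trans hδ'δ)
  have hsub : uIcc t₀ s ⊆ S := uIcc_subset_Icc ht₀ ⟨by linarith, by linarith⟩
  obtain ⟨ξ, hξ, hgs_eq⟩ :=
    taylor_mean_remainder_lagrange_of_iteratedDerivWithin_eq_zero hS hg hsub hzero
  rw [div_mul_eq_mul_div, le_div_iff₀ (abs_pos.mpr hderivne)]
  calc |s - t₀| ^ (v + 1) * |D t₀|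
        = 2 * (v + 1)! * (|D t₀| / 2 * |s - t₀| ^ (v + 1) / (v + 1)!) := by field_simp
    _ ≤ 2 * (v + 1)! * |g s| := by
        rw [hgs_eq, abs_div, abs_mul, abs_pow, Nat.abs_cast]
        gcongr
        exact hDξ ξ (hsub hξ) ((abs_sub_left_of_mem_uIcc hξ).trans hs)
    _ ≤ 2 * (v + 1)! * h := by gcongr
end

section
/- Let μ : [0,1] → ℝ be measurable, c ∈ ℝ, and K_d : ℝ → ℝ be integrable with support contained in [−1,1] and ∫_{−1}^{1} K_d(x)dx = 1. If λ({t ∈ [0,1] : μ(t) − μ(0) = c}) = 0, then lim_{h → 0⁺} ∫_0^1 (∫_{−∞}^{(μ(t)−μ(0)−c)/h} K_d(v) dv) dt = T_c⁺, where T_c⁺ = λ({t ∈ [0,1] : μ(t) − μ(0) > c}). -/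
/-!
Write `F x = ∫_{-∞}^x K_d` and `g s = μ s - μ 0 - c`. Since `K_d` is integrable, `F` is continuous
and bounded by `∫ |K_d|`, with `F → 0` at `-∞` and `F → ∫ K_d = 1` at `+∞`. Hence
`F (g s / h) → 𝟙{g s > 0}` as `h → 0⁺` wherever `g s ≠ 0`, i.e. for almost every `s ∈ [0, 1]`,
and dominated convergence on `[0, 1]` gives the limit `λ {g > 0}`.
-/

open MeasureTheory Set Filter Topology

section IntegralIic

variable {E : Type*} [NormedAddCommGroup E] [NormedSpace ℝ E] {ρ : Measure ℝ} {f : ℝ → E}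

theorem tendsto_integral_Iic_atTop (hf : Integrable f ρ) :
    Tendsto (fun x => ∫ w in Iic x, f w ∂ρ) atTop (𝓝 (∫ w, f w ∂ρ)) :=
  (aecover_Iic tendsto_id).integral_tendsto_of_countably_generated hf

theorem continuous_integral_Iic [NullSingletonClass ρ] (hf : Integrable f ρ) :
    Continuous fun x => ∫ w in Iic x, f w ∂ρ :=
  continuous_iff_continuousAt.2 fun x =>
    (hf.integrableOn.continuousOn_Iic_primitive_Iic (a₀ := x + 1)).continuousAt
      (Iic_mem_nhds (lt_add_one x))

theorem norm_integral_Iic_le (hf : Integrable f ρ) (x : ℝ) :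
    ‖∫ w in Iic x, f w ∂ρ‖ ≤ ∫ w, ‖f w‖ ∂ρ :=
  (norm_integral_le_integral_norm _).trans
    (setIntegral_le_integral hf.norm (ae_of_all _ fun _ => norm_nonneg _))

theorem tendsto_integral_Iic_div_nhdsGT_zero (hf : Integrable f ρ) {x : ℝ} (hx : x ≠ 0) :
    Tendsto (fun h => ∫ w in Iic (x / h), f w ∂ρ) (𝓝[>] 0)
      (𝓝 ((Ioi 0).indicator (fun _ => ∫ w, f w ∂ρ) x)) := by
  simp_rw [div_eq_mul_inv]
  rcases hx.lt_or_gt with hneg | hpos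
  · rw [indicator_of_notMem (show x ∉ Ioi 0 from not_lt.2 hneg.le)]
    exact tendsto_integral_Iic_zero (tendsto_inv_nhdsGT_zero.const_mul_atTop_of_neg hneg)
  · rw [indicator_of_mem (show x ∈ Ioi 0 from hpos)]
    exact (tendsto_integral_Iic_atTop hf).comp (tendsto_inv_nhdsGT_zero.const_mul_atTop hpos)

theorem tendsto_integral_integral_Iic_div_nhdsGT_zero [CompleteSpace E] [NullSingletonClass ρ]
    {α : Type*} [MeasurableSpace α] {ν : Measure α} [IsFiniteMeasure ν] (hf : Integrable f ρ)
    {g : α → ℝ} (hg : Measurable g) (hg0 : ν {s | g s = 0} = 0) :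
    Tendsto (fun h => ∫ s, ∫ w in Iic (g s / h), f w ∂ρ ∂ν) (𝓝[>] 0)
      (𝓝 (ν.real {s | 0 < g s} • ∫ w, f w ∂ρ)) := by
  rw [← integral_indicator_const _ (measurableSet_lt measurable_const hg)]
  refine tendsto_integral_filter_of_dominated_convergence (fun _ => ∫ w, ‖f w‖ ∂ρ)
    (Eventually.of_forall fun h =>
      (continuous_integral_Iic hf).comp_aestronglyMeasurable (hg.div_const h).aestronglyMeasurable)
    (Eventually.of_forall fun h => ae_of_all _ fun s => norm_integral_Iic_le hf _)
    (integrable_const _) ?_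
  filter_upwards [measure_eq_zero_iff_ae_notMem.1 hg0] with s hs
  exact tendsto_integral_Iic_div_nhdsGT_zero hf hs

end IntegralIic

/-- equation (2.8): the smoothed excess-mass functional converges to the
exact excess measure `T_c⁺` as the bandwidth `h → 0⁺`. -/
theorem smoothed_excess_mass_tendsto
    (μ : ℝ → ℝ) (hμ : Measurable μ) (c : ℝ)
    (K_d : ℝ → ℝ) (hK_int : Integrable K_d)
    (hK_supp : Function.support K_d ⊆ Icc (-1 : ℝ) 1)
    (hK_one : (∫ x in Icc (-1 : ℝ) 1, K_d x) = 1)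
    (hzero : volume {s ∈ Icc (0:ℝ) 1 | μ s - μ 0 = c} = 0) :
    Tendsto (fun h : ℝ =>
        ∫ s in Icc (0:ℝ) 1, ∫ w in Iic ((μ s - μ 0 - c) / h), K_d w)
      (𝓝[>] 0)
      (𝓝 ((volume {s ∈ Icc (0:ℝ) 1 | μ s - μ 0 > c}).toReal)) := by
  have hK : ∫ w, K_d w = 1 := by
    rw [← hK_one, setIntegral_eq_integral_of_forall_compl_eq_zero]
    exact fun x hx => Function.notMem_support.1 fun h => hx (hK_supp h)
  have hlevel : volume.restrict (Icc 0 1) {s | μ s - μ 0 - c = 0} = 0 := by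
    rw [Measure.restrict_apply' measurableSet_Icc]
    convert hzero using 2
    ext s
    simp [sub_eq_zero, and_comm]
  have hlim := tendsto_integral_integral_Iic_div_nhdsGT_zero hK_int
    ((hμ.sub_const _).sub_const _) hlevel
  rw [hK, smul_eq_mul, mul_one, measureReal_restrict_apply' measurableSet_Icc, Measure.real] at hlim
  convert hlim using 4
  ext s
  simp only [mem_ofPred_eq, mem_inter_iff, sub_pos, gt_iff_lt, and_comm]
end

section
/- Let v ∈ ℕ, t₀ ∈ ℝ, δ > 0 and let g be (v+1)-times differentiable on [t₀ − δ, t₀ + δ] with g(t₀) = 0, g^{(j)}(t₀) = 0 for 1 ≤ j ≤ v, A := g^{(v+1)}(t₀) ≠ 0, g^{(v+1)} Lipschitz continuous on [t₀ − δ, t₀ + δ], and g strictly monotone on [t₀ − δ, t₀] and on [t₀, t₀ + δ]. Let K_d : ℝ → ℝ be continuous and even with support contained in [−1,1]. Then lim_{h → 0⁺} h^{−1/(v+1)} · ∫_{t₀−δ}^{t₀+δ} K_d(g(t)/h) dt = ((v+1)!/|A|)^{1/(v+1)} · ∫_{−1}^{1} K_d(z^{v+1}) dz. -/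
/-!
With `c = h ^ (1 / (v + 1))` the substitution `t = t₀ + c s` turns the rescaled integral into
`∫ K (g (t₀ + c s) / c ^ (v + 1)) ds`. Taylor's estimate
`|g t - A / (v + 1)! * (t - t₀) ^ (v + 1)| ≤ C |t - t₀| ^ (v + 2)`, obtained from the Lipschitz
bound by integrating `v + 1` times, gives the pointwise limit `K (A / (v + 1)! * s ^ (v + 1))`.
Near `t₀` the same estimate, and away from `t₀` compactness together with `g ≠ 0`, give
`β |t - t₀| ^ (v + 1) ≤ |g t|` on the whole window; hence every integrand vanishes for large `|s|`
and dominated convergence applies. Scaling `s` (and evenness of `K` when `A < 0`) evaluates the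
limit integral.
-/

open MeasureTheory Set Filter Topology
open scoped NNReal Nat

theorem abs_le_mul_abs_sub_pow_succ_of_hasDerivWithinAt {F F' : ℝ → ℝ} {s : Set ℝ} {x₀ L : ℝ}
    {k : ℕ} (hs : Convex ℝ s) (hx₀ : x₀ ∈ s) (hF : ∀ x ∈ s, HasDerivWithinAt F (F' x) s x)
    (hF₀ : F x₀ = 0) (hL : 0 ≤ L) (hF' : ∀ x ∈ s, |F' x| ≤ L * |x - x₀| ^ k) :
    ∀ t ∈ s, |F t| ≤ L * |t - x₀| ^ (k + 1) := by
  intro t ht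
  have hsub : uIcc x₀ t ⊆ s := hs.ordConnected.uIcc_subset hx₀ ht
  have hbound : ∀ x ∈ uIcc x₀ t, ‖F' x‖ ≤ L * |t - x₀| ^ k := fun x hx =>
    (hF' x (hsub hx)).trans <|
      mul_le_mul_of_nonneg_left
        (pow_le_pow_left₀ (abs_nonneg _) (abs_sub_left_of_mem_uIcc hx) k) hL
  have := Convex.norm_image_sub_le_of_norm_hasDerivWithin_le
    (fun x hx => (hF x (hsub hx)).mono hsub) hbound (convex_uIcc x₀ t)
    left_mem_uIcc right_mem_uIcc
  rw [hF₀, sub_zero, Real.norm_eq_abs, Real.norm_eq_abs] at this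
  rw [pow_succ, ← mul_assoc]
  exact this

theorem hasDerivAt_div_factorial_mul_sub_pow (A x₀ x : ℝ) (k : ℕ) :
    HasDerivAt (fun t => A / (k + 1)! * (t - x₀) ^ (k + 1)) (A / k ! * (x - x₀) ^ k) x := by
  refine ((((hasDerivAt_id x).sub_const x₀).fun_pow (k + 1)).const_mul _).congr_deriv ?_
  push_cast [Nat.factorial_succ, id]
  field_simp

theorem abs_sub_taylor_le_of_lipschitzOnWith {f : ℝ → ℝ} {s : Set ℝ} {x₀ : ℝ} {n : ℕ}
    {C : ℝ≥0} (hs : Convex ℝ s) (hx₀ : x₀ ∈ s)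
    (hdiff : ∀ j < n, DifferentiableOn ℝ (iteratedDerivWithin j f s) s)
    (hzero : ∀ j < n, iteratedDerivWithin j f s x₀ = 0)
    (hlip : LipschitzOnWith C (iteratedDerivWithin n f s) s) :
    ∀ t ∈ s,
      |f t - iteratedDerivWithin n f s x₀ / n ! * (t - x₀) ^ n| ≤ C * |t - x₀| ^ (n + 1) := by
  set A := iteratedDerivWithin n f s x₀
  suffices key : ∀ k ≤ n, ∀ t ∈ s,
      |iteratedDerivWithin (n - k) f s t - A / k ! * (t - x₀) ^ k| ≤ C * |t - x₀| ^ (k + 1) by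
    simpa using key n le_rfl
  intro k
  induction k with
  | zero =>
    intro _ t ht
    simpa [← Real.dist_eq] using hlip.dist_le_mul t ht x₀ hx₀
  | succ k ih =>
    intro hk
    have hj : n - (k + 1) < n := by omega
    have hj1 : n - (k + 1) + 1 = n - k := by omega
    refine abs_le_mul_abs_sub_pow_succ_of_hasDerivWithinAt hs hx₀ (fun x hx => ?_) ?_ C.2
      (ih (by omega))
    · rw [← hj1, iteratedDerivWithin_succ]
      exact ((hdiff _ hj x hx).hasDerivWithinAt).sub
        (hasDerivAt_div_factorial_mul_sub_pow A x₀ x k).hasDerivWithinAt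
    · simp [hzero _ hj]

theorem eventually_mul_pow_le_abs_of_taylor {g : ℝ → ℝ} {t₀ B L : ℝ} {n : ℕ} (hB : B ≠ 0)
    (htaylor : ∀ᶠ t in 𝓝 t₀, |g t - B * (t - t₀) ^ n| ≤ L * |t - t₀| ^ (n + 1)) :
    ∀ᶠ t in 𝓝 t₀, |B| / 2 * |t - t₀| ^ n ≤ |g t| := by
  have hlim : Tendsto (fun t => L * |t - t₀|) (𝓝 t₀) (𝓝 0) :=
    Continuous.tendsto' (by fun_prop) t₀ 0 (by simp)
  filter_upwards [htaylor, hlim.eventually (gt_mem_nhds (half_pos (abs_pos.2 hB)))]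
    with t htay hsmall
  have hrem : L * |t - t₀| ^ (n + 1) ≤ |B| / 2 * |t - t₀| ^ n := by
    rw [pow_succ, mul_comm (_ ^ n), ← mul_assoc]
    exact mul_le_mul_of_nonneg_right hsmall.le (by positivity)
  have hrev := abs_sub_abs_le_abs_sub (B * (t - t₀) ^ n) (g t)
  rw [abs_sub_comm, abs_mul, abs_pow] at hrev
  linarith

theorem exists_pos_mul_pow_le_abs {g : ℝ → ℝ} {S : Set ℝ} {t₀ b : ℝ} {n : ℕ}
    (hS : IsCompact S) (hg : ContinuousOn g S) (hne : ∀ t ∈ S, t ≠ t₀ → g t ≠ 0) (hb : 0 < b)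
    (hloc : ∀ᶠ t in 𝓝 t₀, b * |t - t₀| ^ n ≤ |g t|) :
    ∃ β > 0, ∀ t ∈ S, β * |t - t₀| ^ n ≤ |g t| := by
  obtain ⟨ε, hε, hball⟩ := Metric.eventually_nhds_iff.1 hloc
  have hne₀ : ∀ t ∈ S \ Metric.ball t₀ ε, t ≠ t₀ := by
    rintro t ht rfl
    exact ht.2 (Metric.mem_ball_self hε)
  have hpow : ∀ t ∈ S \ Metric.ball t₀ ε, 0 < |t - t₀| ^ n := fun t ht =>
    pow_pos (abs_pos.2 (sub_ne_zero.2 (hne₀ t ht))) n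
  obtain ⟨m, hm, hmin⟩ := (hS.diff Metric.isOpen_ball).exists_forall_le'
    (f := fun t => |g t| / |t - t₀| ^ n)
    ((hg.mono sdiff_subset).abs.div (by fun_prop) fun t ht => (hpow t ht).ne')
    fun t ht => div_pos (abs_pos.2 (hne t ht.1 (hne₀ t ht))) (hpow t ht)
  refine ⟨min b m, lt_min hb hm, fun t ht => ?_⟩
  by_cases hclose : dist t t₀ < ε
  · exact (mul_le_mul_of_nonneg_right (min_le_left _ _) (by positivity)).trans (hball hclose)
  · have hfar : t ∈ S \ Metric.ball t₀ ε := ⟨ht, hclose⟩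
    exact (mul_le_mul_of_nonneg_right (min_le_right _ _) (by positivity)).trans
      ((le_div_iff₀ (hpow t hfar)).1 (hmin t hfar))

theorem ne_apply_of_injOn_Icc {g : ℝ → ℝ} {a b t₀ : ℝ} (hleft : InjOn g (Icc a t₀))
    (hright : InjOn g (Icc t₀ b)) : ∀ t ∈ Icc a b, t ≠ t₀ → g t ≠ g t₀ := by
  intro t ht hne heq
  rcases le_total t t₀ with h | h
  · exact hne (hleft ⟨ht.1, h⟩ ⟨ht.1.trans h, le_rfl⟩ heq)
  · exact hne (hright ⟨h, ht.2⟩ ⟨le_rfl, h.trans ht.2⟩ heq)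

theorem eq_zero_of_one_lt_abs_of_support_subset {K : ℝ → ℝ}
    (hKs : Function.support K ⊆ Icc (-1) 1) {x : ℝ} (hx : 1 < |x|) : K x = 0 :=
  Function.notMem_support.1 fun h => (abs_le.2 (hKs h)).not_gt hx

theorem setIntegral_eq_mul_integral_indicator_add_mul (F : ℝ → ℝ) {S : Set ℝ}
    (hS : MeasurableSet S) (t₀ : ℝ) {c : ℝ} (hc : 0 < c) :
    ∫ t in S, F t = c * ∫ s, S.indicator F (t₀ + c * s) := by
  rw [Measure.integral_comp_mul_left (fun y => S.indicator F (t₀ + y)) c,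
    integral_add_left_eq_self (S.indicator F) t₀, integral_indicator hS,
    abs_of_pos (inv_pos.2 hc), smul_eq_mul, ← mul_assoc, mul_inv_cancel₀ hc.ne', one_mul]

theorem tendsto_div_pow_comp_add_mul {g : ℝ → ℝ} {t₀ B L : ℝ} {n : ℕ}
    (htaylor : ∀ᶠ t in 𝓝 t₀, |g t - B * (t - t₀) ^ n| ≤ L * |t - t₀| ^ (n + 1)) (s : ℝ) :
    Tendsto (fun c => g (t₀ + c * s) / c ^ n) (𝓝[>] 0) (𝓝 (B * s ^ n)) := by
  have hpath : Tendsto (fun c => t₀ + c * s) (𝓝[>] 0) (𝓝 t₀) :=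
    (Continuous.tendsto' (by fun_prop) 0 t₀ (by simp)).mono_left nhdsWithin_le_nhds
  rw [tendsto_iff_norm_sub_tendsto_zero]
  refine squeeze_zero_norm' ?_ ((Continuous.tendsto' (by fun_prop) 0 0
    (by simp)).mono_left nhdsWithin_le_nhds : Tendsto (fun c => L * |s| ^ (n + 1) * c) _ _)
  filter_upwards [hpath.eventually htaylor, self_mem_nhdsWithin] with c hrem (hc : 0 < c)
  rw [add_sub_cancel_left] at hrem
  rw [norm_norm, Real.norm_eq_abs, div_sub' (by positivity), abs_div, abs_pow, abs_of_pos hc,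
    div_le_iff₀ (by positivity)]
  calc |g (t₀ + c * s) - c ^ n * (B * s ^ n)| = |g (t₀ + c * s) - B * (c * s) ^ n| := by
        ring_nf
    _ ≤ L * |c * s| ^ (n + 1) := hrem
    _ = L * |s| ^ (n + 1) * c * c ^ n := by rw [abs_mul, abs_of_pos hc]; ring

section Rescaling

variable {g K : ℝ → ℝ} {S : Set ℝ} {t₀ B L β : ℝ} {n : ℕ}

theorem indicator_comp_rescale_eq_zero_of_lt_abs (hn : n ≠ 0) (hβ : 0 < β)
    (hlower : ∀ t ∈ S, β * |t - t₀| ^ n ≤ |g t|) (hKs : Function.support K ⊆ Icc (-1) 1)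
    {c s : ℝ} (hc : 0 < c) (hs : max 1 β⁻¹ < |s|) :
    S.indicator (fun t => K (g t / c ^ n)) (t₀ + c * s) = 0 := by
  refine indicator_apply_eq_zero.2 fun ht => eq_zero_of_one_lt_abs_of_support_subset hKs ?_
  have hβs : 1 < β * |s| ^ n := calc
    1 = β * β⁻¹ := (mul_inv_cancel₀ hβ.ne').symm
    _ < β * |s| ^ n := mul_lt_mul_of_pos_left ((le_max_right _ _).trans_lt hs |>.trans_le
      (le_self_pow₀ ((le_max_left _ _).trans hs.le) hn)) hβ
  rw [abs_div, abs_pow, abs_of_pos hc, one_lt_div (by positivity)]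
  calc c ^ n < c ^ n * (β * |s| ^ n) := lt_mul_of_one_lt_right (by positivity) hβs
    _ = β * |c * s| ^ n := by rw [abs_mul, abs_of_pos hc]; ring
    _ ≤ |g (t₀ + c * s)| := by simpa using hlower _ ht

theorem tendsto_integral_indicator_comp_rescale (hn : n ≠ 0) (hS : MeasurableSet S)
    (hSt₀ : S ∈ 𝓝 t₀) (hg : ContinuousOn g S)
    (htaylor : ∀ t ∈ S, |g t - B * (t - t₀) ^ n| ≤ L * |t - t₀| ^ (n + 1))
    (hβ : 0 < β) (hlower : ∀ t ∈ S, β * |t - t₀| ^ n ≤ |g t|)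
    (hK : Continuous K) (hKs : Function.support K ⊆ Icc (-1) 1) :
    Tendsto (fun c => ∫ s, S.indicator (fun t => K (g t / c ^ n)) (t₀ + c * s))
      (𝓝[>] 0) (𝓝 (∫ s, K (B * s ^ n))) := by
  obtain ⟨M, hM⟩ := hK.bounded_above_of_compact_support
    (HasCompactSupport.of_support_subset_isCompact isCompact_Icc hKs)
  set R := max 1 β⁻¹
  refine tendsto_integral_filter_of_dominated_convergence ((Icc (-R) R).indicator fun _ => M)
    ?_ ?_ ((integrableOn_const measure_Icc_lt_top.ne).integrable_indicator measurableSet_Icc) ?_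
  · refine Eventually.of_forall fun c => ?_
    have hF : Measurable (S.indicator fun t => K (g t / c ^ n)) := by
      classical
      rw [← piecewise_eq_indicator]
      exact (hK.comp_continuousOn (hg.div_const _)).measurable_piecewise continuousOn_const hS
    exact (hF.comp (by fun_prop : Measurable fun s : ℝ => t₀ + c * s)).aestronglyMeasurable
  · filter_upwards [self_mem_nhdsWithin] with c (hc : 0 < c)
    refine ae_of_all _ fun s => ?_
    by_cases hs : |s| ≤ R
    · rw [indicator_of_mem (show s ∈ Icc (-R) R from abs_le.1 hs)]
      exact (norm_indicator_le_norm_self _ _).trans (hM _)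
    · rw [indicator_of_notMem (show s ∉ Icc (-R) R from fun h => hs (abs_le.2 h)),
        norm_le_zero_iff]
      exact indicator_comp_rescale_eq_zero_of_lt_abs hn hβ hlower hKs hc (not_le.1 hs)
  · refine ae_of_all _ fun s => ?_
    have hpath : Tendsto (fun c => t₀ + c * s) (𝓝[>] 0) (𝓝 t₀) :=
      (Continuous.tendsto' (by fun_prop) 0 t₀ (by simp)).mono_left nhdsWithin_le_nhds
    have hmem : ∀ᶠ c in 𝓝[>] 0, t₀ + c * s ∈ S := hpath.eventually_mem hSt₀
    exact ((hK.tendsto _).comp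
      (tendsto_div_pow_comp_add_mul (eventually_of_mem hSt₀ htaylor) s)).congr'
      (hmem.mono fun c ht => (indicator_of_mem ht _).symm)

theorem tendsto_rpow_mul_setIntegral_comp_div (hn : n ≠ 0) (hS : MeasurableSet S)
    (hSt₀ : S ∈ 𝓝 t₀) (hg : ContinuousOn g S)
    (htaylor : ∀ t ∈ S, |g t - B * (t - t₀) ^ n| ≤ L * |t - t₀| ^ (n + 1))
    (hβ : 0 < β) (hlower : ∀ t ∈ S, β * |t - t₀| ^ n ≤ |g t|)
    (hK : Continuous K) (hKs : Function.support K ⊆ Icc (-1) 1) :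
    Tendsto (fun h => h ^ (-(n : ℝ)⁻¹) * ∫ t in S, K (g t / h)) (𝓝[>] 0)
      (𝓝 (∫ s, K (B * s ^ n))) := by
  have hroot : Tendsto (fun h : ℝ => h ^ (n : ℝ)⁻¹) (𝓝[>] 0) (𝓝[>] 0) := by
    refine tendsto_nhdsWithin_iff.2 ⟨?_, ?_⟩
    · have := (Real.continuousAt_rpow_const 0 (n : ℝ)⁻¹ (Or.inr (by positivity))).tendsto
      rw [Real.zero_rpow (by positivity)] at this
      exact this.mono_left nhdsWithin_le_nhds
    · filter_upwards [self_mem_nhdsWithin] with h (hh : 0 < h)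
      exact Real.rpow_pos_of_pos hh _
  refine ((tendsto_integral_indicator_comp_rescale hn hS hSt₀ hg htaylor hβ hlower hK hKs).comp
    hroot).congr' ?_
  filter_upwards [self_mem_nhdsWithin] with h (hh : 0 < h)
  rw [Function.comp_apply, Real.rpow_inv_natCast_pow hh.le hn,
    setIntegral_eq_mul_integral_indicator_add_mul _ hS t₀ (Real.rpow_pos_of_pos hh _),
    ← mul_assoc, ← Real.rpow_add hh, neg_add_cancel, Real.rpow_zero, one_mul]

end Rescaling

theorem integral_comp_mul_pow_of_even {K : ℝ → ℝ} {B : ℝ} {n : ℕ} (hn : n ≠ 0) (hB : B ≠ 0)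
    (hKe : ∀ x, K (-x) = K x) (hKs : Function.support K ⊆ Icc (-1) 1) :
    ∫ s, K (B * s ^ n) = |B| ^ (-(n : ℝ)⁻¹) * ∫ z in Icc (-1) 1, K (z ^ n) := by
  set b := |B| ^ (-(n : ℝ)⁻¹) with hbdef
  have hb : 0 < b := Real.rpow_pos_of_pos (abs_pos.2 hB) _
  have hbn : b ^ n = |B|⁻¹ := by
    rw [hbdef, Real.rpow_neg (abs_nonneg B), inv_pow, Real.rpow_inv_natCast_pow (abs_nonneg B) hn]
  have hsign : ∀ z, K (B * (b * z) ^ n) = K (z ^ n) := by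
    intro z
    rw [mul_pow, ← mul_assoc, hbn]
    rcases lt_or_gt_of_ne hB with hneg | hpos
    · rw [abs_of_neg hneg, inv_neg, mul_neg, mul_inv_cancel₀ hB, neg_one_mul, hKe]
    · rw [abs_of_pos hpos, mul_inv_cancel₀ hB, one_mul]
  have hscale := Measure.integral_comp_mul_left (fun s => K (B * s ^ n)) b
  simp only [hsign] at hscale
  have hset : ∫ z in Icc (-1) 1, K (z ^ n) = ∫ z, K (z ^ n) := by
    refine setIntegral_eq_integral_of_forall_compl_eq_zero fun z hz =>
      eq_zero_of_one_lt_abs_of_support_subset hKs ?_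
    have hz1 : 1 < |z| := not_le.1 fun h => hz (abs_le.1 h)
    rw [abs_pow]
    exact hz1.trans_le (le_self_pow₀ hz1.le hn)
  rw [hset, hscale, abs_of_pos (inv_pos.2 hb), smul_eq_mul, ← mul_assoc, mul_inv_cancel₀ hb.ne',
    one_mul]

/-- single-root Laplace-type asymptotic for kernel integrals over a
shrinking level-set window (equations (B.2)–(B.4), (B.28)). -/
theorem single_root_laplace_asymptotic
    (v : ℕ) (t₀ δ : ℝ) (hδ : 0 < δ) (g : ℝ → ℝ)
    (hg0 : g t₀ = 0)
    (hdiff : ∀ j ≤ v, DifferentiableOn ℝ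
      (iteratedDerivWithin j g (Icc (t₀ - δ) (t₀ + δ))) (Icc (t₀ - δ) (t₀ + δ)))
    (hderiv0 : ∀ j, 1 ≤ j → j ≤ v →
      iteratedDerivWithin j g (Icc (t₀ - δ) (t₀ + δ)) t₀ = 0)
    (hderivne : iteratedDerivWithin (v + 1) g (Icc (t₀ - δ) (t₀ + δ)) t₀ ≠ 0)
    (hlip : ∃ C : NNReal, LipschitzOnWith C
      (iteratedDerivWithin (v + 1) g (Icc (t₀ - δ) (t₀ + δ))) (Icc (t₀ - δ) (t₀ + δ)))
    (hmonoL : StrictMonoOn g (Icc (t₀ - δ) t₀) ∨ StrictAntiOn g (Icc (t₀ - δ) t₀))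
    (hmonoR : StrictMonoOn g (Icc t₀ (t₀ + δ)) ∨ StrictAntiOn g (Icc t₀ (t₀ + δ)))
    (K_d : ℝ → ℝ) (hKc : Continuous K_d) (hKe : ∀ x, K_d (-x) = K_d x)
    (hKs : Function.support K_d ⊆ Icc (-1 : ℝ) 1) :
    Tendsto (fun h : ℝ =>
        h ^ (-(1:ℝ) / ((v:ℝ) + 1)) * ∫ x in Icc (t₀ - δ) (t₀ + δ), K_d (g x / h))
      (𝓝[>] 0)
      (𝓝 (((Nat.factorial (v + 1) : ℝ) /
          |iteratedDerivWithin (v + 1) g (Icc (t₀ - δ) (t₀ + δ)) t₀|) ^ ((1:ℝ) / ((v:ℝ) + 1)) *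
        ∫ z in Icc (-1 : ℝ) 1, K_d (z ^ (v + 1)))) := by
  obtain ⟨C, hC⟩ := hlip
  set I := Icc (t₀ - δ) (t₀ + δ)
  set A := iteratedDerivWithin (v + 1) g I t₀
  have hI : I ∈ 𝓝 t₀ := Icc_mem_nhds (by linarith) (by linarith)
  have htaylor := abs_sub_taylor_le_of_lipschitzOnWith (convex_Icc _ _) (mem_of_mem_nhds hI)
    (fun j hj => hdiff j (by omega)) (fun j hj => (Nat.eq_zero_or_pos j).elim
      (fun h => by simpa [h] using hg0) fun h => hderiv0 j h (by omega)) hC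
  have hB : A / (v + 1)! ≠ 0 := div_ne_zero hderivne (by positivity)
  have hgc : ContinuousOn g I := by simpa using (hdiff 0 (Nat.zero_le v)).continuousOn
  have hne : ∀ t ∈ I, t ≠ t₀ → g t ≠ 0 := hg0 ▸ ne_apply_of_injOn_Icc
    (hmonoL.elim StrictMonoOn.injOn StrictAntiOn.injOn)
    (hmonoR.elim StrictMonoOn.injOn StrictAntiOn.injOn)
  obtain ⟨β, hβ, hlower⟩ := exists_pos_mul_pow_le_abs isCompact_Icc hgc hne
    (half_pos (abs_pos.2 hB))
    (eventually_mul_pow_le_abs_of_taylor hB (eventually_of_mem hI htaylor))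
  have hlim := tendsto_rpow_mul_setIntegral_comp_div v.succ_ne_zero measurableSet_Icc hI hgc
    htaylor hβ hlower hKc hKs
  rw [integral_comp_mul_pow_of_even v.succ_ne_zero hB hKe hKs, abs_div, Nat.abs_cast,
    Real.rpow_neg (by positivity), ← Real.inv_rpow (by positivity), inv_div] at hlim
  convert hlim using 4 <;> push_cast <;> ring
end

section
/- Let K : ℝ → ℝ be continuous with support contained in [−1,1], and let (b_n)_{n ∈ ℕ} be a sequence of positive reals with b_n → 0 and n·b_n → ∞. Then lim_{n → ∞} (1/(n·b_n)) · Σ_{j=1}^{n} K(j/(n·b_n))² = ∫_0^∞ K(x)² dx. -/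
/-!
On `(k/c, (k+1)/c]` the step function `x ↦ f (⌈c x⌉ / c)` is the constant `f ((k+1)/c)`, so the
Riemann sum `(1/c) ∑_{j=1}^N f (j/c)` is its integral over `(0, N/c]`. As `c → ∞` these step
functions converge pointwise to `f`, and since `⌈c x⌉ / c ≥ x` they vanish to the right of the
support of `f`; dominated convergence then gives `∫_0^∞ f`. The theorem is the case `f = K²`,
`c = n b_n`, `N = n`, where `N / c = 1 / b_n → ∞`.
-/

open MeasureTheory Set Filter Topology

noncomputable def ceilStep (f : ℝ → ℝ) (c x : ℝ) : ℝ := f (⌈c * x⌉ / c)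

lemma ceil_mul_eq_of_mem_Ioc {c x : ℝ} (hc : 0 < c) {k : ℤ} (hx : x ∈ Ioc (k / c) ((k + 1) / c)) :
    ⌈c * x⌉ = k + 1 := by
  obtain ⟨hlo, hhi⟩ := hx
  rw [div_lt_iff₀ hc] at hlo
  rw [le_div_iff₀ hc] at hhi
  rw [Int.ceil_eq_iff]
  push_cast
  constructor <;> linarith

lemma le_ceil_mul_div {c : ℝ} (hc : 0 < c) (x : ℝ) : x ≤ ⌈c * x⌉ / c := by
  rw [le_div_iff₀ hc, mul_comm]
  exact Int.le_ceil _

lemma ceil_mul_div_lt {c : ℝ} (hc : 0 < c) (x : ℝ) : ⌈c * x⌉ / c < x + 1 / c := by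
  rw [div_lt_iff₀ hc, add_mul, one_div_mul_cancel hc.ne', mul_comm]
  exact Int.ceil_lt_add_one _

lemma tendsto_ceil_mul_div {ι : Type*} {l : Filter ι} {c : ι → ℝ} (hc : Tendsto c l atTop)
    (x : ℝ) : Tendsto (fun i => (⌈c i * x⌉ : ℝ) / c i) l (𝓝 x) := by
  have hup : Tendsto (fun i => x + 1 / c i) l (𝓝 x) := by
    simpa using tendsto_const_nhds.add (tendsto_const_nhds (x := (1:ℝ)).div_atTop hc)
  have hpos : ∀ᶠ i in l, 0 < c i := hc.eventually_gt_atTop 0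
  refine tendsto_of_tendsto_of_tendsto_of_le_of_le' tendsto_const_nhds hup ?_ ?_
  · filter_upwards [hpos] with i hi using le_ceil_mul_div hi x
  · filter_upwards [hpos] with i hi using (ceil_mul_div_lt hi x).le

lemma measurable_ceilStep {f : ℝ → ℝ} (hf : Measurable f) (c : ℝ) : Measurable (ceilStep f c) :=
  hf.comp (by fun_prop)

lemma ceilStep_eqOn_Ioc (f : ℝ → ℝ) {c : ℝ} (hc : 0 < c) (k : ℕ) :
    EqOn (ceilStep f c) (fun _ => f ((k + 1) / c)) (Ioc (k / c) ((k + 1) / c)) := by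
  intro x hx
  have hceil := ceil_mul_eq_of_mem_Ioc hc (k := k) (by exact_mod_cast hx)
  simp [ceilStep, hceil]

lemma integral_ceilStep_cell (f : ℝ → ℝ) {c : ℝ} (hc : 0 < c) (k : ℕ) :
    ∫ x in (k / c)..((k + 1) / c), ceilStep f c x = f ((k + 1) / c) / c := by
  have hle : (k : ℝ) / c ≤ (k + 1) / c := by gcongr; linarith
  rw [intervalIntegral.integral_of_le hle,
    setIntegral_congr_fun measurableSet_Ioc (ceilStep_eqOn_Ioc f hc k), setIntegral_const,
    measureReal_def, Real.volume_Ioc, ENNReal.toReal_ofReal (sub_nonneg.2 hle), smul_eq_mul]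
  field_simp
  ring

lemma intervalIntegrable_ceilStep_cell (f : ℝ → ℝ) {c : ℝ} (hc : 0 < c) (k : ℕ) :
    IntervalIntegrable (ceilStep f c) volume (k / c) ((k + 1) / c) := by
  have hle : (k : ℝ) / c ≤ (k + 1) / c := by gcongr; linarith
  rw [intervalIntegrable_iff_integrableOn_Ioc_of_le hle]
  exact (integrableOn_const measure_Ioc_lt_top.ne).congr_fun
    (ceilStep_eqOn_Ioc f hc k).symm measurableSet_Ioc

lemma integral_Ioc_ceilStep (f : ℝ → ℝ) {c : ℝ} (hc : 0 < c) (N : ℕ) :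
    ∫ x in Ioc 0 (N / c), ceilStep f c x = 1 / c * ∑ j ∈ Finset.Icc 1 N, f (j / c) := by
  rw [← intervalIntegral.integral_of_le (by positivity)]
  have hadjacent := intervalIntegral.sum_integral_adjacent_intervals
    (a := fun k : ℕ => (k : ℝ) / c) (n := N) (f := ceilStep f c) (μ := volume) fun k _ => by
      simpa using intervalIntegrable_ceilStep_cell f hc k
  simp only [Nat.cast_add, Nat.cast_one, Nat.cast_zero, zero_div] at hadjacent
  have hshift := Finset.sum_Ico_add' (fun j : ℕ => 1 / c * f (j / c)) 0 N 1
  rw [zero_add] at hshift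
  rw [← hadjacent, Finset.mul_sum, ← Finset.Ico_add_one_right_eq_Icc, ← hshift,
    Finset.range_eq_Ico]
  refine Finset.sum_congr rfl fun k _ => ?_
  rw [integral_ceilStep_cell f hc k]
  push_cast
  ring

lemma norm_indicator_ceilStep_le {f : ℝ → ℝ} {M R c : ℝ} (hc : 0 < c) (hM : ∀ y, ‖f y‖ ≤ M)
    (hfR : ∀ y, R < y → f y = 0) (a x : ℝ) :
    ‖(Ioc 0 a).indicator (ceilStep f c) x‖ ≤ (Ioc 0 R).indicator (fun _ => M) x := by
  have hM0 : 0 ≤ M := (norm_nonneg _).trans (hM 0)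
  by_cases hxa : x ∈ Ioc 0 a
  · rw [indicator_of_mem hxa]
    by_cases hxR : x ≤ R
    · rw [indicator_of_mem (show x ∈ Ioc 0 R from ⟨hxa.1, hxR⟩)]
      exact hM _
    · rw [ceilStep, hfR _ ((not_le.1 hxR).trans_le (le_ceil_mul_div hc x)), norm_zero]
      exact indicator_nonneg (fun _ _ => hM0) x
  · rw [indicator_of_notMem hxa, norm_zero]
    exact indicator_nonneg (fun _ _ => hM0) x

lemma tendsto_indicator_ceilStep {ι : Type*} {l : Filter ι} {f : ℝ → ℝ} (hf : Continuous f)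
    {c a : ι → ℝ} (hc : Tendsto c l atTop) (ha : Tendsto a l atTop) (x : ℝ) :
    Tendsto (fun i => (Ioc 0 (a i)).indicator (ceilStep f (c i)) x) l
      (𝓝 ((Ioi 0).indicator f x)) := by
  by_cases hx : x ∈ Ioi (0 : ℝ)
  · rw [indicator_of_mem hx]
    refine ((hf.tendsto x).comp (tendsto_ceil_mul_div hc x)).congr' ?_
    filter_upwards [ha.eventually_ge_atTop x] with i hi
    exact (indicator_of_mem (show x ∈ Ioc 0 (a i) from ⟨hx, hi⟩) (ceilStep f (c i))).symm
  · rw [indicator_of_notMem hx]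
    exact tendsto_const_nhds.congr fun i => (indicator_of_notMem (fun h => hx h.1) _).symm

theorem tendsto_riemannSum_Icc_integral_Ioi {ι : Type*} {l : Filter ι} [l.IsCountablyGenerated]
    {f : ℝ → ℝ} (hf : Continuous f) (hfs : HasCompactSupport f) {c : ι → ℝ} {N : ι → ℕ}
    (hc : Tendsto c l atTop) (hN : Tendsto (fun i => (N i : ℝ) / c i) l atTop) :
    Tendsto (fun i => 1 / c i * ∑ j ∈ Finset.Icc 1 (N i), f (j / c i)) l
      (𝓝 (∫ x in Ioi 0, f x)) := by
  obtain ⟨M, hM⟩ := hfs.exists_bound_of_continuous hf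
  obtain ⟨R, hR⟩ := hfs.isCompact.bddAbove
  have hfR : ∀ y, R < y → f y = 0 := fun y hy =>
    image_eq_zero_of_notMem_tsupport fun h => (hR h).not_gt hy
  have hlim := tendsto_integral_filter_of_dominated_convergence (μ := volume)
    (F := fun i => (Ioc 0 (N i / c i)).indicator (ceilStep f (c i))) (f := (Ioi 0).indicator f)
    ((Ioc 0 R).indicator fun _ => M)
    (Eventually.of_forall fun i =>
      ((measurable_ceilStep hf.measurable _).indicator measurableSet_Ioc).aestronglyMeasurable)
    (by
      filter_upwards [hc.eventually_gt_atTop 0] with i hi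
      exact ae_of_all _ (norm_indicator_ceilStep_le hi hM hfR _))
    ((integrable_indicator_iff measurableSet_Ioc).2 (integrableOn_const measure_Ioc_lt_top.ne))
    (ae_of_all _ (tendsto_indicator_ceilStep hf hc hN))
  rw [integral_indicator measurableSet_Ioi] at hlim
  refine hlim.congr' ?_
  filter_upwards [hc.eventually_gt_atTop 0] with i hi
  rw [integral_indicator measurableSet_Ioc, integral_Ioc_ceilStep f hi]

/-- behind equation (B.29): Riemann-sum limit for squared boundary
kernels evaluated at the grid `j/(n·b_n)`. -/
theorem boundary_kernel_riemann_limit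
    (K : ℝ → ℝ) (hKc : Continuous K)
    (hKs : Function.support K ⊆ Icc (-1 : ℝ) 1)
    (b : ℕ → ℝ) (hbpos : ∀ n, 0 < b n)
    (hb0 : Tendsto b atTop (𝓝 0))
    (hnb : Tendsto (fun n : ℕ => (n:ℝ) * b n) atTop atTop) :
    Tendsto (fun n : ℕ =>
        (1 / ((n:ℝ) * b n)) * ∑ j ∈ Finset.Icc 1 n, (K ((j:ℝ) / ((n:ℝ) * b n)))^2)
      atTop (𝓝 (∫ x in Ioi (0:ℝ), (K x)^2)) := by
  have hK : HasCompactSupport K :=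
    HasCompactSupport.intro isCompact_Icc fun x hx => Function.notMem_support.1 fun h => hx (hKs h)
  have hinv : Tendsto (fun n : ℕ => (n : ℝ) / (n * b n)) atTop atTop := by
    refine (tendsto_nhdsWithin_iff.2 ⟨hb0, Eventually.of_forall hbpos⟩).inv_tendsto_nhdsGT_zero
      |>.congr' ?_
    filter_upwards [eventually_ne_atTop 0] with n hn
    rw [Pi.inv_apply, div_mul_cancel_left₀ (Nat.cast_ne_zero.2 hn)]
  exact tendsto_riemannSum_Icc_integral_Ioi (f := fun x => K x ^ 2) (N := id) (hKc.pow 2)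
    (hK.comp_left (g := (· ^ 2)) (by simp)) hnb hinv
end

section
/- Let f : [0,1] → ℝ be Lipschitz continuous with constant L and suppose f(t) = 0 for every t outside a set S ⊆ [0,1] that is a union of at most k intervals with λ(S) ≤ ρ. Then for every integer N ≥ 1: |(1/N)·Σ_{i=1}^{N} f(i/N) − ∫_0^1 f(t) dt| ≤ L·(N·ρ + 2k)/N². -/
/-!
On the grid of mesh `1/N`, the right-endpoint rule errs by at most `L/N²` on each cell, and not at
all on a cell where `f` vanishes. A cell where `f` does not vanish meets `S`: either it lies inside
`S`, and at most `Nρ` disjoint cells of length `1/N` fit in `S`, or it straddles an endpoint of one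
of the `k` intervals, and an interval has at most two such cells.
-/

open MeasureTheory Set
open scoped Finset Function

section StraddlingCells

variable {ι α : Type*} [LinearOrder ι] [Preorder α] {C : ι → Set α}

theorem Set.OrdConnected.subset_of_between (hC : ∀ ⦃i j⦄, i < j → ∀ x ∈ C i, ∀ y ∈ C j, x ≤ y)
    {J : Set α} (hJ : J.OrdConnected) {a i b : ι} (hai : a < i) (hib : i < b)
    (ha : (C a ∩ J).Nonempty) (hb : (C b ∩ J).Nonempty) : C i ⊆ J := by
  obtain ⟨x, hxa, hxJ⟩ := ha
  obtain ⟨y, hyb, hyJ⟩ := hb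
  exact fun z hz => hJ.out hxJ hyJ ⟨hC hai x hxa z hz, hC hib z hz y hyb⟩

open Classical in
theorem card_filter_straddling_le_two (hC : ∀ ⦃i j⦄, i < j → ∀ x ∈ C i, ∀ y ∈ C j, x ≤ y)
    {J : Set α} (hJ : J.OrdConnected) (s : Finset ι) :
    #{i ∈ s | (C i ∩ J).Nonempty ∧ ¬C i ⊆ J} ≤ 2 := by
  set T := {i ∈ s | (C i ∩ J).Nonempty ∧ ¬C i ⊆ J}
  rcases T.eq_empty_or_nonempty with hT | hT
  · simp [hT]
  refine (Finset.card_le_card (t := {T.min' hT, T.max' hT}) fun i hi => ?_).trans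
    Finset.card_le_two
  by_contra hend
  simp only [Finset.mem_insert, Finset.mem_singleton, not_or] at hend
  have hmin := (Finset.mem_filter.1 (T.min'_mem hT)).2.1
  have hmax := (Finset.mem_filter.1 (T.max'_mem hT)).2.1
  exact (Finset.mem_filter.1 hi).2.2 <| hJ.subset_of_between hC
    ((T.min'_le i hi).lt_of_ne' hend.1) ((T.le_max' i hi).lt_of_ne hend.2) hmin hmax

open Classical in
theorem card_filter_inter_iUnion_nonempty_le {κ : Type*} [Fintype κ]
    (hC : ∀ ⦃i j⦄, i < j → ∀ x ∈ C i, ∀ y ∈ C j, x ≤ y) {I : κ → Set α}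
    (hI : ∀ j, (I j).OrdConnected) (s : Finset ι) :
    #{i ∈ s | (C i ∩ ⋃ j, I j).Nonempty} ≤ #{i ∈ s | C i ⊆ ⋃ j, I j} + 2 * Fintype.card κ := by
  have hcover : {i ∈ s | (C i ∩ ⋃ j, I j).Nonempty} ⊆ {i ∈ s | C i ⊆ ⋃ j, I j} ∪
      Finset.univ.biUnion fun j => {i ∈ s | (C i ∩ I j).Nonempty ∧ ¬C i ⊆ I j} := by
    intro i hi
    obtain ⟨his, x, hxC, hxI⟩ := Finset.mem_filter.1 hi
    obtain ⟨j, hxj⟩ := mem_iUnion.1 hxI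
    by_cases hsub : C i ⊆ ⋃ j, I j
    · exact Finset.mem_union_left _ (Finset.mem_filter.2 ⟨his, hsub⟩)
    · refine Finset.mem_union_right _ (Finset.mem_biUnion.2 ⟨j, Finset.mem_univ j, ?_⟩)
      exact Finset.mem_filter.2 ⟨his, ⟨x, hxC, hxj⟩, fun h => hsub (h.trans (subset_iUnion I j))⟩
  calc _ ≤ _ := Finset.card_le_card hcover
    _ ≤ _ := Finset.card_union_le _ _
    _ ≤ _ := Nat.add_le_add_left (Finset.card_biUnion_le.trans (Finset.sum_le_card_nsmul _ _ 2
          fun j _ => card_filter_straddling_le_two hC (hI j) s)) _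
    _ = _ := by rw [Finset.card_univ, smul_eq_mul, mul_comm]

end StraddlingCells

theorem norm_sum_le_card_filter_mul {ι E : Type*} [SeminormedAddCommGroup E] (s : Finset ι)
    (p : ι → Prop) [DecidablePred p] {e : ι → E} {M : ℝ} (he : ∀ i ∈ s, ¬p i → e i = 0)
    (hM : ∀ i ∈ s, ‖e i‖ ≤ M) : ‖∑ i ∈ s, e i‖ ≤ #{i ∈ s | p i} * M := by
  rw [← Finset.sum_filter_of_ne fun i hi hne => by_contra fun hp => hne (he i hi hp)]
  refine (norm_sum_le _ _).trans ?_
  rw [← nsmul_eq_mul]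
  exact Finset.sum_le_card_nsmul _ _ _ fun i hi => hM i (Finset.mem_filter.1 hi).1

theorem abs_mul_sub_setIntegral_Ioc_le {f : ℝ → ℝ} {L : NNReal} {a b : ℝ} (hab : a ≤ b)
    (hf : LipschitzOnWith L f (Icc a b)) :
    |(b - a) * f b - ∫ x in Ioc a b, f x| ≤ L * (b - a) ^ 2 := by
  have hfin : volume (Ioc a b) < ⊤ := measure_Ioc_lt_top
  have hconst : (b - a) * f b = ∫ _ in Ioc a b, f b := by
    rw [setIntegral_const, Real.volume_real_Ioc_of_le hab, smul_eq_mul]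
  have hclose : ∀ x ∈ Ioc a b, ‖f b - f x‖ ≤ L * (b - a) := fun x hx => by
    rw [← dist_eq_norm]
    refine (hf.dist_le_mul b (right_mem_Icc.2 hab) x (Ioc_subset_Icc_self hx)).trans ?_
    rw [Real.dist_eq, abs_of_nonneg (sub_nonneg.2 hx.2)]
    gcongr
    exact hx.1.le
  rw [hconst, ← integral_sub (integrableOn_const hfin.ne : IntegrableOn (fun _ => f b) (Ioc a b) volume)
    ((hf.continuousOn.integrableOn_Icc).mono_set Ioc_subset_Icc_self), ← Real.norm_eq_abs]
  calc _ ≤ L * (b - a) * volume.real (Ioc a b) := norm_setIntegral_le_of_norm_le_const hfin hclose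
    _ = L * (b - a) ^ 2 := by rw [Real.volume_real_Ioc_of_le hab]; ring

section GridCells

variable {N i : ℕ}

def gridCell (N i : ℕ) : Set ℝ := Ioc ((i : ℝ) / N) ((i + 1 : ℝ) / N)

theorem gridCell_right_sub_left (N i : ℕ) : (i + 1 : ℝ) / N - (i : ℝ) / N = (N : ℝ)⁻¹ := by
  rw [← sub_div, add_sub_cancel_left, one_div]

theorem volume_gridCell (N i : ℕ) : volume (gridCell N i) = ENNReal.ofReal (N : ℝ)⁻¹ := by
  rw [gridCell, Real.volume_Ioc, gridCell_right_sub_left]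

theorem right_mem_gridCell (hN : 0 < N) (i : ℕ) : (i + 1 : ℝ) / N ∈ gridCell N i :=
  right_mem_Ioc.2 (by gcongr; linarith)

theorem Icc_gridCell_subset_Icc (hi : i < N) : Icc ((i : ℝ) / N) ((i + 1 : ℝ) / N) ⊆ Icc 0 1 :=
  Icc_subset_Icc (by positivity) (div_le_one_of_le₀ (by exact_mod_cast hi) (Nat.cast_nonneg N))

theorem gridCell_subset_Icc (hi : i < N) : gridCell N i ⊆ Icc 0 1 :=
  Ioc_subset_Icc_self.trans (Icc_gridCell_subset_Icc hi)

theorem lt_of_mem_gridCell {j : ℕ} (hij : i < j) {x y : ℝ} (hx : x ∈ gridCell N i)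
    (hy : y ∈ gridCell N j) : x < y := by
  have hij' : (i + 1 : ℝ) ≤ j := by exact_mod_cast hij
  exact hx.2.trans_lt ((div_le_div_of_nonneg_right hij' (Nat.cast_nonneg N)).trans_lt hy.1)

theorem pairwise_disjoint_gridCell (N : ℕ) : Pairwise (Disjoint on gridCell N) := by
  intro i j hij
  rcases hij.lt_or_gt with h | h
  · exact disjoint_left.2 fun x hi hj => (lt_of_mem_gridCell h hi hj).false
  · exact disjoint_left.2 fun x hi hj => (lt_of_mem_gridCell h hj hi).false

theorem card_le_mul_volume_of_gridCell_subset (hN : 0 < N) {S : Set ℝ} (hS : volume S ≠ ⊤)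
    {t : Finset ℕ} (ht : ∀ i ∈ t, gridCell N i ⊆ S) : (#t : ℝ) ≤ N * (volume S).toReal := by
  have hvol : volume (⋃ i ∈ t, gridCell N i) = #t * ENNReal.ofReal (N : ℝ)⁻¹ := by
    rw [measure_biUnion_finset ((pairwise_disjoint_gridCell N).set_pairwise _)
      fun _ _ => measurableSet_Ioc]
    simp only [volume_gridCell, Finset.sum_const, nsmul_eq_mul]
  have hle := ENNReal.toReal_mono hS (hvol ▸ measure_mono (iUnion₂_subset ht))
  rw [ENNReal.toReal_mul, ENNReal.toReal_natCast, ENNReal.toReal_ofReal (by positivity),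
    ← div_eq_mul_inv, div_le_iff₀ (by exact_mod_cast hN)] at hle
  linarith

open Classical in
theorem card_gridCell_inter_nonempty_le (hN : 0 < N) {κ : Type*} [Fintype κ] {I : κ → Set ℝ}
    (hI : ∀ j, (I j).OrdConnected) (hfin : volume (⋃ j, I j) ≠ ⊤) :
    (#{i ∈ Finset.range N | (gridCell N i ∩ ⋃ j, I j).Nonempty} : ℝ) ≤
      N * (volume (⋃ j, I j)).toReal + 2 * Fintype.card κ := by
  have hsplit := card_filter_inter_iUnion_nonempty_le (C := gridCell N)
    (fun i j hij x hx y hy => (lt_of_mem_gridCell hij hx hy).le) hI (Finset.range N)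
  have hinside := card_le_mul_volume_of_gridCell_subset hN hfin
    (t := {i ∈ Finset.range N | gridCell N i ⊆ ⋃ j, I j}) fun i hi => (Finset.mem_filter.1 hi).2
  calc _ ≤ (#{i ∈ Finset.range N | gridCell N i ⊆ ⋃ j, I j} : ℝ) + 2 * Fintype.card κ := by
        exact_mod_cast hsplit
    _ ≤ _ := by gcongr

noncomputable def gridCellError (f : ℝ → ℝ) (N i : ℕ) : ℝ :=
  (N : ℝ)⁻¹ * f ((i + 1 : ℝ) / N) - ∫ x in gridCell N i, f x

theorem abs_gridCellError_le {f : ℝ → ℝ} {L : NNReal} (hf : LipschitzOnWith L f (Icc 0 1))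
    (hi : i < N) : |gridCellError f N i| ≤ L / N ^ 2 := by
  have h := abs_mul_sub_setIntegral_Ioc_le (by rw [← sub_nonneg, gridCell_right_sub_left]; positivity)
    (hf.mono (Icc_gridCell_subset_Icc hi))
  rwa [gridCell_right_sub_left, inv_pow, ← div_eq_mul_inv] at h

theorem gridCellError_eq_zero {f : ℝ → ℝ} (hN : 0 < N) (hf : ∀ x ∈ gridCell N i, f x = 0) :
    gridCellError f N i = 0 := by
  rw [gridCellError, hf _ (right_mem_gridCell hN i), setIntegral_eq_zero_of_forall_eq_zero hf,
    mul_zero, sub_zero]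

theorem integral_Icc_eq_sum_gridCell {f : ℝ → ℝ} (hN : 0 < N) (hf : IntegrableOn f (Icc 0 1)) :
    ∫ x in Icc (0 : ℝ) 1, f x = ∑ i ∈ Finset.range N, ∫ x in gridCell N i, f x := by
  have hmono (i : ℕ) : (i : ℝ) / N ≤ (i + 1 : ℝ) / N := by gcongr; simp
  have hadj := intervalIntegral.sum_integral_adjacent_intervals (f := f) (μ := volume)
    (a := fun i : ℕ => (i : ℝ) / N) (n := N) fun i hi => by
      rw [intervalIntegrable_iff_integrableOn_Ioc_of_le (by simpa using hmono i)]
      exact hf.mono_set (Ioc_subset_Icc_self.trans (by simpa using Icc_gridCell_subset_Icc hi))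
  simp only [CharP.cast_eq_zero, zero_div, div_self (Nat.cast_ne_zero (R := ℝ) |>.2 hN.ne'),
    Nat.cast_add, Nat.cast_one] at hadj
  rw [integral_Icc_eq_integral_Ioc, ← intervalIntegral.integral_of_le zero_le_one, ← hadj]
  exact Finset.sum_congr rfl fun i _ => intervalIntegral.integral_of_le (hmono i)

theorem riemannSum_sub_integral_eq_sum_gridCellError {f : ℝ → ℝ} (hN : 0 < N)
    (hf : IntegrableOn f (Icc 0 1)) :
    (1 / (N : ℝ)) * ∑ i ∈ Finset.Icc 1 N, f ((i : ℝ) / N) - ∫ x in Icc (0 : ℝ) 1, f x =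
      ∑ i ∈ Finset.range N, gridCellError f N i := by
  have hshift : ∑ i ∈ Finset.Icc 1 N, f ((i : ℝ) / N) =
      ∑ i ∈ Finset.range N, f ((i + 1 : ℝ) / N) := by
    rw [← Finset.Ico_add_one_right_eq_Icc, Finset.sum_Ico_eq_sum_range, add_tsub_cancel_right]
    simp [add_comm]
  rw [hshift, integral_Icc_eq_sum_gridCell hN hf, Finset.mul_sum, ← Finset.sum_sub_distrib,
    one_div]
  rfl

end GridCells

/-- Riemann-sum error bound for a Lipschitz function vanishing outside a
small union of intervals (mechanism behind `R⁺_{3,n}` and `β_n`). -/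
theorem riemann_error_small_support
    (f : ℝ → ℝ) (L : NNReal) (hf : LipschitzOnWith L f (Icc 0 1))
    (k : ℕ) (S : Set ℝ) (hS : S ⊆ Icc 0 1)
    (I : Fin k → Set ℝ) (hI : ∀ j, (I j).OrdConnected) (hSI : S = ⋃ j, I j)
    (ρ : ℝ) (hρ : (volume S).toReal ≤ ρ)
    (hvanish : ∀ x ∈ Icc (0:ℝ) 1, x ∉ S → f x = 0) :
    ∀ N : ℕ, 1 ≤ N →
      |(1 / (N:ℝ)) * ∑ i ∈ Finset.Icc 1 N, f ((i:ℝ) / (N:ℝ)) -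
          ∫ x in Icc (0:ℝ) 1, f x| ≤
        (L:ℝ) * ((N:ℝ) * ρ + 2 * (k:ℝ)) / (N:ℝ)^2 := by
  intro N hN
  classical
  subst hSI
  rw [riemannSum_sub_integral_eq_sum_gridCellError hN hf.continuousOn.integrableOn_Icc,
    ← Real.norm_eq_abs]
  calc _ ≤ #{i ∈ Finset.range N | (gridCell N i ∩ ⋃ j, I j).Nonempty} * (L / N ^ 2 : ℝ) :=
        norm_sum_le_card_filter_mul _ _
          (fun i hi hmiss => gridCellError_eq_zero hN fun x hx => hvanish x
            (gridCell_subset_Icc (Finset.mem_range.1 hi) hx) fun hxS => hmiss ⟨x, hx, hxS⟩)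
          fun i hi => abs_gridCellError_le hf (Finset.mem_range.1 hi)
    _ ≤ (N * ρ + 2 * k) * (L / N ^ 2 : ℝ) := by
        gcongr
        refine (card_gridCell_inter_nonempty_le hN hI
          ((measure_mono hS).trans_lt measure_Icc_lt_top).ne).trans ?_
        rw [Fintype.card_fin]
        gcongr
    _ = _ := by ring
end
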